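/- arXiv:1302.4502 — 4 statements merged into one kernel-verified Lean document; each statement's English description precedes it below -/
import Mathlib

section
/- Every 2-uniform projective Hjelmslev plane can be generated by the Hjelmslev construction: if ℋ is a 2-uniform (m,m) projective Hjelmslev plane, then there exist a projective plane 𝒫 of order m, affine planes 𝒜_p of order m for each point p of 𝒫, orthogonal arrays 𝒪_l = OA(2, m+1, m) for each line l of 𝒫, and admissible choices of labeled parallel classes (distinct lines through p receiving distinct parallel classes of 𝒜_p), such that ℋ is isomorphic, as an incidence structure, to the structure produced by the construction from these data. -/
/-- A projective plane: any two distinct points lie on a unique common line, any two distinct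
lines meet in a unique point, and there are four points no three of which are collinear. -/
structure IsProjectivePlane {P L : Type} (I : P → L → Prop) : Prop where
  point_line : ∀ p q : P, p ≠ q → ∃! l : L, I p l ∧ I q l
  line_point : ∀ g h : L, g ≠ h → ∃! p : P, I p g ∧ I p h
  nondeg : ∃ a b c d : P, a ≠ b ∧ a ≠ c ∧ a ≠ d ∧ b ≠ c ∧ b ≠ d ∧ c ≠ d ∧
    (∀ l : L, ¬(I a l ∧ I b l ∧ I c l)) ∧ (∀ l : L, ¬(I a l ∧ I b l ∧ I d l)) ∧
    (∀ l : L, ¬(I a l ∧ I c l ∧ I d l)) ∧ (∀ l : L, ¬(I b l ∧ I c l ∧ I d l))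

/-- A projective plane has order `m` if every line is incident with exactly `m + 1` points. -/
def ProjOrder {P L : Type} (I : P → L → Prop) (m : ℕ) : Prop :=
  ∀ l : L, Nat.card {p : P // I p l} = m + 1

/-- An affine plane: any two distinct points lie on a unique common line, for every
non-incident point–line pair there is a unique line through the point disjoint from the
line, and there exist three non-collinear points. -/
structure IsAffinePlane {P L : Type} (I : P → L → Prop) : Prop where
  point_line : ∀ p q : P, p ≠ q → ∃! l : L, I p l ∧ I q l
  playfair : ∀ (p : P) (l : L), ¬ I p l → ∃! g : L, I p g ∧ ∀ q : P, ¬(I q l ∧ I q g)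
  nondeg : ∃ a b c : P, a ≠ b ∧ a ≠ c ∧ b ≠ c ∧ ∀ l : L, ¬(I a l ∧ I b l ∧ I c l)

/-- An affine plane has order `m` if every line is incident with exactly `m` points. -/
def AffOrder {P L : Type} (I : P → L → Prop) (m : ℕ) : Prop :=
  ∀ l : L, Nat.card {p : P // I p l} = m

/-- Two lines are parallel if they are equal or disjoint. -/
def Parallel {P L : Type} (I : P → L → Prop) (g h : L) : Prop :=
  g = h ∨ ∀ p : P, ¬(I p g ∧ I p h)

/-- A parallel class: an equivalence class of lines under parallelism. -/
def IsParallelClass {P L : Type} (I : P → L → Prop) (Cl : Set L) : Prop :=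
  ∃ g : L, Cl = {h : L | Parallel I g h}

/-- The (strength-2) orthogonal array property: for any two distinct columns, the map sending
a row to its pair of entries in those columns is a bijection onto `S × S`, i.e. each ordered
pair of symbols occurs in exactly one row. -/
def IsOrthArray2 {R Col S : Type} (F : R → Col → S) : Prop :=
  ∀ c₁ c₂ : Col, c₁ ≠ c₂ → Function.Bijective (fun r : R => (F r c₁, F r c₂))
/-- Data for the (projective) Hjelmslev construction: a projective plane `𝒫` of order `m`;
for each point `p` of `𝒫` an affine plane `𝒜_p` of order `m`; for each line `l` of `𝒫` an
orthogonal array `OA(2, m+1, m)` whose columns are indexed by the `m+1` points of `l`; and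
for each incident pair `(p, l)` a parallel class of `𝒜_p` whose `m` lines are labeled
bijectively by the `m` symbols of `𝒪_l`, such that distinct lines of `𝒫` through `p`
receive distinct parallel classes of `𝒜_p`. -/
structure PHData (m : ℕ) : Type 1 where
  /-- points of the projective plane `𝒫` -/
  Pt : Type
  /-- lines of the projective plane `𝒫` -/
  Ln : Type
  /-- incidence of `𝒫` -/
  I : Pt → Ln → Prop
  proj : IsProjectivePlane I
  ord : ProjOrder I m
  /-- points of the affine plane `𝒜_p` -/
  APt : Pt → Type
  /-- lines of the affine plane `𝒜_p` -/
  ALn : Pt → Type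
  /-- incidence of `𝒜_p` -/
  AI : ∀ p : Pt, APt p → ALn p → Prop
  aff : ∀ p : Pt, IsAffinePlane (AI p)
  aord : ∀ p : Pt, AffOrder (AI p) m
  /-- rows of the orthogonal array `𝒪_l` -/
  Row : Ln → Type
  /-- symbols of the orthogonal array `𝒪_l` -/
  Sym : Ln → Type
  row_card : ∀ l : Ln, Nat.card (Row l) = m ^ 2
  sym_card : ∀ l : Ln, Nat.card (Sym l) = m
  /-- the orthogonal array `𝒪_l`, with columns labeled by the points of `l` -/
  O : ∀ l : Ln, Row l → {p : Pt // I p l} → Sym l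
  oa : ∀ l : Ln, IsOrthArray2 (O l)
  /-- the labeling of the chosen parallel class `C(p, l)`: symbol `s` labels line `C p l h s` -/
  C : ∀ (p : Pt) (l : Ln), I p l → Sym l → ALn p
  C_inj : ∀ (p : Pt) (l : Ln) (h : I p l), Function.Injective (C p l h)
  C_class : ∀ (p : Pt) (l : Ln) (h : I p l), IsParallelClass (AI p) (Set.range (C p l h))
  C_distinct : ∀ (p : Pt) (l₁ l₂ : Ln) (h₁ : I p l₁) (h₂ : I p l₂), l₁ ≠ l₂ →
    Set.range (C p l₁ h₁) ≠ Set.range (C p l₂ h₂)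

/-- Points of the constructed structure `ℋ`: pairs `(p, a)` with `p` a point of `𝒫` and `a`
a point of `𝒜_p`. -/
def PHData.HPt {m : ℕ} (D : PHData m) : Type := Σ p : D.Pt, D.APt p

/-- Lines of the constructed structure `ℋ`: pairs `(l, r)` with `l` a line of `𝒫` and `r` a
row of `𝒪_l`. -/
def PHData.HLn {m : ℕ} (D : PHData m) : Type := Σ l : D.Ln, D.Row l

/-- Incidence of `ℋ`: `(p, a)` is incident with `(l, r)` iff `p` lies on `l` and `a` lies on
the line of `C(p, l)` labeled by the entry of `𝒪_l` in row `r` and column `p`. -/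
def PHData.HI {m : ℕ} (D : PHData m) : D.HPt → D.HLn → Prop :=
  fun x g => ∃ h : D.I x.1 g.1, D.AI x.1 x.2 (D.C x.1 g.1 h (D.O g.1 g.2 ⟨x.1, h⟩))

/-- Point-neighbour relation of `ℋ`: `(p, a) ∼ (p', a')` iff `p = p'`. -/
def PHData.nPt {m : ℕ} (D : PHData m) : D.HPt → D.HPt → Prop := fun x y => x.1 = y.1

/-- Line-neighbour relation of `ℋ`: `(l, r) ∼ (l', r')` iff `l = l'`. -/
def PHData.nLn {m : ℕ} (D : PHData m) : D.HLn → D.HLn → Prop := fun g h => g.1 = h.1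

/-- `ℋ = (I, nP, nL)` is a projective Hjelmslev plane with (specified) epimorphism
`(φP, φL)` onto the projective plane `I'`. -/
structure IsPHPlaneWith {P L P' L' : Type} (I : P → L → Prop)
    (nP : P → P → Prop) (nL : L → L → Prop)
    (I' : P' → L' → Prop) (φP : P → P') (φL : L → L') : Prop where
  nP_equiv : Equivalence nP
  nL_equiv : Equivalence nL
  join : ∀ p q : P, ∃ l : L, I p l ∧ I q l
  meet : ∀ g h : L, ∃ p : P, I p g ∧ I p h
  line_nbr : ∀ g h : L, (∃ p q : P, p ≠ q ∧ I p g ∧ I p h ∧ I q g ∧ I q h) → nL g h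
  point_nbr : ∀ p q : P, (∃ g h : L, g ≠ h ∧ I p g ∧ I q g ∧ I p h ∧ I q h) → nP p q
  target_proj : IsProjectivePlane I'
  φP_surj : Function.Surjective φP
  φL_surj : Function.Surjective φL
  incid_pres : ∀ (p : P) (l : L), I p l → I' (φP p) (φL l)
  nP_iff : ∀ p q : P, φP p = φP q ↔ nP p q
  nL_iff : ∀ g h : L, φL g = φL h ↔ nL g h

/-- `ℋ = (I, nP, nL)` is an affine Hjelmslev plane with (specified) epimorphism
`(φP, φL)` onto the affine plane `I'`. -/
structure IsAHPlaneWith {P L P' L' : Type} (I : P → L → Prop)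
    (nP : P → P → Prop) (nL : L → L → Prop)
    (I' : P' → L' → Prop) (φP : P → P') (φL : L → L') : Prop where
  nP_equiv : Equivalence nP
  nL_equiv : Equivalence nL
  join : ∀ p q : P, ∃ l : L, I p l ∧ I q l
  line_nbr : ∀ g h : L, (∃ p q : P, p ≠ q ∧ I p g ∧ I p h ∧ I q g ∧ I q h) → nL g h
  target_aff : IsAffinePlane I'
  φP_surj : Function.Surjective φP
  φL_surj : Function.Surjective φL
  incid_pres : ∀ (p : P) (l : L), I p l → I' (φP p) (φL l)
  nP_iff : ∀ p q : P, φP p = φP q ↔ nP p q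
  nL_iff : ∀ g h : L, φL g = φL h ↔ nL g h
  par : ∀ g h : L, (∀ p : P, ¬(I p g ∧ I p h)) → Parallel I' (φL g) (φL h)

/-- Each point of each line has exactly `t` neighbours on that line. -/
def NbrsOnLines {P L : Type} (I : P → L → Prop) (nP : P → P → Prop) (t : ℕ) : Prop :=
  ∀ (l : L) (p : P), I p l → Nat.card {q : P // I q l ∧ nP p q} = t

/-- `ℋ` is a projective Hjelmslev plane (with associated projective plane unspecified). -/
def IsPHPlane {P L : Type} (I : P → L → Prop) (nP : P → P → Prop) (nL : L → L → Prop) :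
    Prop :=
  ∃ (P' L' : Type) (I' : P' → L' → Prop) (φP : P → P') (φL : L → L'),
    IsPHPlaneWith I nP nL I' φP φL

/-- `ℋ` is a `(t, r)` projective Hjelmslev plane: each point of each line has exactly `t`
neighbours on that line, and the associated projective plane has order `r`. -/
def IsTRPHPlane {P L : Type} (I : P → L → Prop) (nP : P → P → Prop) (nL : L → L → Prop)
    (t r : ℕ) : Prop :=
  ∃ (P' L' : Type) (I' : P' → L' → Prop) (φP : P → P') (φL : L → L'),
    IsPHPlaneWith I nP nL I' φP φL ∧ ProjOrder I' r ∧ NbrsOnLines I nP t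

/-- `ℋ` is a `(t, r)` affine Hjelmslev plane: each point of each line has exactly `t`
neighbours on that line, and the associated affine plane has order `r`. -/
def IsTRAHPlane {P L : Type} (I : P → L → Prop) (nP : P → P → Prop) (nL : L → L → Prop)
    (t r : ℕ) : Prop :=
  ∃ (P' L' : Type) (I' : P' → L' → Prop) (φP : P → P') (φL : L → L'),
    IsAHPlaneWith I nP nL I' φP φL ∧ AffOrder I' r ∧ NbrsOnLines I nP t

/-- The lines of the point-neighbourhood restriction at `p`: the nonempty intersections of
lines of `ℋ` with the neighbourhood of `p`, viewed as sets of points. -/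
def NbrLines {P L : Type} (I : P → L → Prop) (nP : P → P → Prop) (p : P) : Set (Set P) :=
  {s : Set P | s.Nonempty ∧ ∃ g : L, s = {q : P | nP q p ∧ I q g}}

/-- `ℋ` is 2-uniform: every point-neighbourhood restriction is an ordinary affine plane, and
for each point, every line of the restriction is the restriction of the same number of lines
of `ℋ`. -/
def TwoUniform {P L : Type} (I : P → L → Prop) (nP : P → P → Prop) : Prop :=
  ∀ p : P,
    IsAffinePlane (fun (q : {q : P // nP q p}) (s : NbrLines I nP p) =>
      (q : P) ∈ (s : Set P)) ∧
    ∃ n : ℕ, ∀ s : NbrLines I nP p,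
      Nat.card {g : L // {q : P | nP q p ∧ I q g} = (s : Set P)} = n
/-- Data for the affine Hjelmslev construction: an affine plane `𝒜` of order `m`; for each
point `p` of `𝒜` an affine plane `𝒜_p` of order `m`; for each line `l` of `𝒜` an orthogonal
array `OA(2, m, m)` whose columns are indexed by the `m` points of `l`; and for each incident
pair `(p, l)` a parallel class of `𝒜_p` whose `m` lines are labeled bijectively by the `m`
symbols of `𝒪_l`, such that distinct lines of `𝒜` through `p` receive distinct parallel
classes of `𝒜_p`. -/
structure AHData (m : ℕ) : Type 1 where
  /-- points of the base affine plane `𝒜` -/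
  Pt : Type
  /-- lines of the base affine plane `𝒜` -/
  Ln : Type
  /-- incidence of `𝒜` -/
  I : Pt → Ln → Prop
  base : IsAffinePlane I
  ord : AffOrder I m
  /-- points of the affine plane `𝒜_p` -/
  APt : Pt → Type
  /-- lines of the affine plane `𝒜_p` -/
  ALn : Pt → Type
  /-- incidence of `𝒜_p` -/
  AI : ∀ p : Pt, APt p → ALn p → Prop
  aff : ∀ p : Pt, IsAffinePlane (AI p)
  aord : ∀ p : Pt, AffOrder (AI p) m
  /-- rows of the orthogonal array `𝒪_l` -/
  Row : Ln → Type
  /-- symbols of the orthogonal array `𝒪_l` -/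
  Sym : Ln → Type
  row_card : ∀ l : Ln, Nat.card (Row l) = m ^ 2
  sym_card : ∀ l : Ln, Nat.card (Sym l) = m
  /-- the orthogonal array `𝒪_l`, with columns labeled by the points of `l` -/
  O : ∀ l : Ln, Row l → {p : Pt // I p l} → Sym l
  oa : ∀ l : Ln, IsOrthArray2 (O l)
  /-- the labeling of the chosen parallel class `C(p, l)`: symbol `s` labels line `C p l h s` -/
  C : ∀ (p : Pt) (l : Ln), I p l → Sym l → ALn p
  C_inj : ∀ (p : Pt) (l : Ln) (h : I p l), Function.Injective (C p l h)
  C_class : ∀ (p : Pt) (l : Ln) (h : I p l), IsParallelClass (AI p) (Set.range (C p l h))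
  C_distinct : ∀ (p : Pt) (l₁ l₂ : Ln) (h₁ : I p l₁) (h₂ : I p l₂), l₁ ≠ l₂ →
    Set.range (C p l₁ h₁) ≠ Set.range (C p l₂ h₂)

/-- Points of the constructed structure `ℋ`: pairs `(p, a)` with `p` a point of `𝒜` and `a`
a point of `𝒜_p`. -/
def AHData.HPt {m : ℕ} (D : AHData m) : Type := Σ p : D.Pt, D.APt p

/-- Lines of the constructed structure `ℋ`: pairs `(l, r)` with `l` a line of `𝒜` and `r` a
row of `𝒪_l`. -/
def AHData.HLn {m : ℕ} (D : AHData m) : Type := Σ l : D.Ln, D.Row l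

/-- Incidence of `ℋ`: `(p, a)` is incident with `(l, r)` iff `p` lies on `l` and `a` lies on
the line of `C(p, l)` labeled by the entry of `𝒪_l` in row `r` and column `p`. -/
def AHData.HI {m : ℕ} (D : AHData m) : D.HPt → D.HLn → Prop :=
  fun x g => ∃ h : D.I x.1 g.1, D.AI x.1 x.2 (D.C x.1 g.1 h (D.O g.1 g.2 ⟨x.1, h⟩))

/-- Point-neighbour relation of `ℋ`: `(p, a) ∼ (p', a')` iff `p = p'`. -/
def AHData.nPt {m : ℕ} (D : AHData m) : D.HPt → D.HPt → Prop := fun x y => x.1 = y.1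

/-- Line-neighbour relation of `ℋ`: `(l, r) ∼ (l', r')` iff `l = l'`. -/
def AHData.nLn {m : ℕ} (D : AHData m) : D.HLn → D.HLn → Prop := fun g h => g.1 = h.1

section Helpers

lemma finOfCard {α : Type*} {k : ℕ} (h : Nat.card α = k) (hk : k ≠ 0) : Nonempty (α ≃ Fin k) := by
  have : Finite α := Nat.finite_of_card_ne_zero (by omega)
  exact ⟨(Nat.equivFinOfCardPos (by omega)).trans (finCongr h)⟩

lemma card_sigma_const {ι : Type*} {β : ι → Type*} [Finite ι] {k : ℕ}
    (h : ∀ i, Nat.card (β i) = k) (hk : k ≠ 0) : Nat.card ((i : ι) × β i) = Nat.card ι * k := by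
  have e : ∀ i, β i ≃ Fin k := fun i => Classical.choice (finOfCard (h i) hk)
  have : ((i : ι) × β i) ≃ ι × Fin k := (Equiv.sigmaCongrRight e).trans (Equiv.sigmaEquivProd ι (Fin k))
  rw [Nat.card_congr this, Nat.card_prod, Nat.card_eq_fintype_card (α := Fin k), Fintype.card_fin]

lemma card_of_fibers {α β : Type*} (f : α → β) {k : ℕ} (hk : k ≠ 0) [Finite α]
    (hs : Function.Surjective f) (hf : ∀ b, Nat.card {a // f a = b} = k) :
    Nat.card α = Nat.card β * k := by
  have : Finite β := Finite.of_surjective f hs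
  rw [← Nat.card_congr (Equiv.sigmaFiberEquiv f)]
  exact card_sigma_const hf hk

lemma three_le_card {α : Type*} [Finite α] {x y z : α} (h : x ≠ y) (h2 : x ≠ z) (h3 : y ≠ z) :
    3 ≤ Nat.card α := by
  have := Fintype.ofFinite α
  have := Classical.decEq α
  rw [Nat.card_eq_fintype_card]
  have hc : ({x, y, z} : Finset α).card = 3 := by
    rw [Finset.card_insert_of_notMem (by simp [h, h2]),
      Finset.card_insert_of_notMem (by simp [h3]), Finset.card_singleton]
  calc 3 = ({x,y,z} : Finset α).card := hc.symm
    _ ≤ _ := Finset.card_le_card (Finset.subset_univ _)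

lemma nontrivial_of_card {α : Type*} {k : ℕ} (h : Nat.card α = k) (hk : 2 ≤ k) : Nontrivial α := by
  have hf : Finite α := Nat.finite_of_card_ne_zero (by omega)
  have := Fintype.ofFinite α
  rw [Nat.card_eq_fintype_card] at h
  exact Fintype.one_lt_card_iff_nontrivial.mp (by omega)

lemma nonempty_of_card {α : Type*} {k : ℕ} (h : Nat.card α = k) (hk : k ≠ 0) : Nonempty α := by
  rcases finOfCard h hk with ⟨e⟩
  exact ⟨e.symm ⟨0, by omega⟩⟩

lemma card_option' {α : Type*} [Finite α] : Nat.card (Option α) = Nat.card α + 1 := by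
  have := Fintype.ofFinite α
  simp [Nat.card_eq_fintype_card]

lemma card_ne_one_lower {α : Type*} {k : ℕ} (hcard : Nat.card α = k) (hk : 2 ≤ k) (a : α) :
    Nat.card {x : α // x ≠ a} = k - 1 := by
  have hf : Finite α := Nat.finite_of_card_ne_zero (by omega)
  have hd : DecidableEq α := Classical.decEq α
  have e : α ≃ Option {x : α // x ≠ a} :=
    { toFun := fun b => if h : b = a then none else some ⟨b, h⟩
      invFun := fun o => Option.rec a (fun x => x.1) o
      left_inv := fun b => by
        dsimp only
        by_cases h : b = a
        · rw [dif_pos h]; exact h.symm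
        · rw [dif_neg h]
      right_inv := fun o => by
        rcases o with _ | x
        · dsimp only
          rw [dif_pos rfl]
        · dsimp only
          rw [dif_neg x.2] }
  have hfs : Finite {x : α // x ≠ a} := Subtype.finite
  have hco := Nat.card_congr e
  rw [card_option', hcard] at hco
  omega

end Helpers

section PP

variable {P L : Type} {I : P → L → Prop} {m : ℕ}

lemma pp_off_line (hp : IsProjectivePlane I) (l : L) : ∃ p, ¬ I p l := by
  obtain ⟨a,b,c,d, hab, hac, had, hbc, hbd, hcd, h1, h2, h3, h4⟩ := hp.nondeg
  by_cases ha : I a l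
  · by_cases hb : I b l
    · exact ⟨c, fun hc => h1 l ⟨ha, hb, hc⟩⟩
    · exact ⟨b, hb⟩
  · exact ⟨a, ha⟩

lemma pp_line_off (hp : IsProjectivePlane I) (p : P) : ∃ l, ¬ I p l := by
  obtain ⟨a,b,c,d, hab, hac, had, hbc, hbd, hcd, h1, h2, h3, h4⟩ := hp.nondeg
  obtain ⟨l1, hl1, -⟩ := hp.point_line a b hab
  obtain ⟨l2, hl2, -⟩ := hp.point_line c d hcd
  obtain ⟨l3, hl3, -⟩ := hp.point_line a c hac
  by_cases hp1 : I p l1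
  · by_cases hp2 : I p l2
    · refine ⟨l3, fun hp3 => ?_⟩
      have hne13 : l1 ≠ l3 := fun he => h1 l1 ⟨hl1.1, hl1.2, he ▸ hl3.2⟩
      obtain ⟨q, -, hq⟩ := hp.line_point l1 l3 hne13
      have hpa : p = a := (hq p ⟨hp1, hp3⟩).trans (hq a ⟨hl1.1, hl3.1⟩).symm
      exact h3 l2 ⟨hpa ▸ hp2, hl2.1, hl2.2⟩
    · exact ⟨l2, hp2⟩
  · exact ⟨l1, hp1⟩

lemma pp_m2 (hp : IsProjectivePlane I) (ho : ProjOrder I m) : 2 ≤ m := by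
  obtain ⟨a,b,c,d, hab, hac, had, hbc, hbd, hcd, h1, h2, h3, h4⟩ := hp.nondeg
  obtain ⟨l, hl, -⟩ := hp.point_line a b hab
  have hfin : Finite {p // I p l} := Nat.finite_of_card_ne_zero (by rw [ho l]; omega)
  have hc : ¬ I c l := fun h => h1 l ⟨hl.1, hl.2, h⟩
  obtain ⟨k, hk, -⟩ := hp.point_line c d hcd
  have hlk : l ≠ k := fun h => hc (h ▸ hk.1)
  obtain ⟨e, he, -⟩ := hp.line_point l k hlk
  have hea : e ≠ a := fun h => h3 k ⟨h ▸ he.2, hk.1, hk.2⟩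
  have heb : e ≠ b := fun h => h4 k ⟨h ▸ he.2, hk.1, hk.2⟩
  have h3le : 3 ≤ Nat.card {p // I p l} :=
    three_le_card (x := (⟨a, hl.1⟩ : {p // I p l})) (y := ⟨b, hl.2⟩) (z := ⟨e, he.1⟩)
      (fun h => hab (congrArg Subtype.val h))
      (fun h => hea (congrArg Subtype.val h).symm)
      (fun h => heb (congrArg Subtype.val h).symm)
  rw [ho l] at h3le; omega

lemma pp_lines_through (hp : IsProjectivePlane I) (ho : ProjOrder I m) (p : P) :
    Nat.card {l // I p l} = m + 1 := by
  obtain ⟨l0, hl0⟩ := pp_line_off hp p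
  have key : ∀ q : P, I q l0 → ∃! l, I p l ∧ I q l :=
    fun q hq => hp.point_line p q (fun h => hl0 (h ▸ hq))
  have key2 : ∀ l : L, I p l → ∃! q, I q l ∧ I q l0 :=
    fun l hl => hp.line_point l l0 (fun h => hl0 (h ▸ hl))
  have e : {q // I q l0} ≃ {l // I p l} :=
    { toFun := fun q => ⟨(key q.1 q.2).choose, (key q.1 q.2).choose_spec.1.1⟩
      invFun := fun l => ⟨(key2 l.1 l.2).choose, (key2 l.1 l.2).choose_spec.1.2⟩
      left_inv := fun q => Subtype.ext
        (((key2 _ ((key q.1 q.2).choose_spec.1.1)).choose_spec.2 q.1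
          ⟨(key q.1 q.2).choose_spec.1.2, q.2⟩).symm)
      right_inv := fun l => Subtype.ext
        (((key (key2 l.1 l.2).choose (key2 l.1 l.2).choose_spec.1.2).choose_spec.2 l.1
          ⟨l.2, (key2 l.1 l.2).choose_spec.1.1⟩).symm) }
  rw [← Nat.card_congr e, ho l0]

end PP

section AFF

variable {P L : Type} {J : P → L → Prop} {m : ℕ}

lemma af_line_off (ha : IsAffinePlane J) (p : P) : ∃ l, ¬ J p l := by
  obtain ⟨a, b, c, hab, hac, hbc, hnc⟩ := ha.nondeg
  obtain ⟨lab, hlab, -⟩ := ha.point_line a b hab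
  obtain ⟨lac, hlac, -⟩ := ha.point_line a c hac
  obtain ⟨lbc, hlbc, -⟩ := ha.point_line b c hbc
  by_cases h1 : J p lab
  · by_cases h2 : J p lac
    · refine ⟨lbc, fun h3 => ?_⟩
      have hne : lab ≠ lac := fun he => hnc lab ⟨hlab.1, hlab.2, he ▸ hlac.2⟩
      have hpa : p = a := by
        by_contra hpa
        obtain ⟨l, -, hl⟩ := ha.point_line p a hpa
        exact hne ((hl lab ⟨h1, hlab.1⟩).trans (hl lac ⟨h2, hlac.1⟩).symm)
      exact hnc lbc ⟨hpa ▸ h3, hlbc.1, hlbc.2⟩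
    · exact ⟨lac, h2⟩
  · exact ⟨lab, h1⟩

lemma af_lines_through (ha : IsAffinePlane J) (ho : AffOrder J m) (hm : 2 ≤ m) (a : P) :
    Nat.card {k // J a k} = m + 1 := by
  classical
  obtain ⟨l0, hl0⟩ := af_line_off ha a
  have hfin : Finite {q // J q l0} := Nat.finite_of_card_ne_zero (by rw [ho l0]; omega)
  have haq : ∀ q : {q // J q l0}, a ≠ q.1 := fun q h => hl0 (h ▸ q.2)
  have key : ∀ q : {q // J q l0}, ∃! l, J a l ∧ J q.1 l := fun q => ha.point_line a q.1 (haq q)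
  have hpar := ha.playfair a l0 hl0
  have e : {k // J a k} ≃ Option {q // J q l0} :=
    { toFun := fun k => if h : ∃ q, J q l0 ∧ J q k.1 then some ⟨h.choose, h.choose_spec.1⟩ else none
      invFun := fun o => Option.rec ⟨hpar.choose, hpar.choose_spec.1.1⟩
        (fun q => ⟨(key q).choose, (key q).choose_spec.1.1⟩) o
      left_inv := fun k => by
        dsimp only
        by_cases h : ∃ q, J q l0 ∧ J q k.1
        · rw [dif_pos h]
          exact Subtype.ext
            (((key ⟨h.choose, h.choose_spec.1⟩).choose_spec.2 k.1 ⟨k.2, h.choose_spec.2⟩).symm)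
        · rw [dif_neg h]
          exact Subtype.ext ((hpar.choose_spec.2 k.1 ⟨k.2, fun q hq => h ⟨q, hq⟩⟩).symm)
      right_inv := fun o => by
        rcases o with _ | q
        · dsimp only
          rw [dif_neg]
          intro h
          exact hpar.choose_spec.1.2 h.choose ⟨h.choose_spec.1, h.choose_spec.2⟩
        · dsimp only
          have hex : ∃ x, J x l0 ∧ J x (key q).choose :=
            ⟨q.1, q.2, (key q).choose_spec.1.2⟩
          rw [dif_pos hex]
          congr 1
          apply Subtype.ext
          by_contra hne
          obtain ⟨l, -, hl⟩ := ha.point_line hex.choose q.1 hne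
          have h1 : l0 = l := hl l0 ⟨hex.choose_spec.1, q.2⟩
          have h2 : (key q).choose = l := hl _ ⟨hex.choose_spec.2, (key q).choose_spec.1.2⟩
          exact hl0 (h1 ▸ h2 ▸ (key q).choose_spec.1.1) }
  rw [Nat.card_congr e, card_option', ho l0]

lemma af_card_points (ha : IsAffinePlane J) (ho : AffOrder J m) (hm : 2 ≤ m) :
    Nat.card P = m ^ 2 := by
  obtain ⟨a, b, c, hab, hac, hbc, hnc⟩ := ha.nondeg
  have hd : DecidableEq P := Classical.decEq P
  have key : ∀ b : P, b ≠ a → ∃! l, J a l ∧ J b l := fun b h => ha.point_line a b (Ne.symm h)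
  have e : P ≃ Option ((k : {k // J a k}) × {q // J q k.1 ∧ q ≠ a}) :=
    { toFun := fun b => if h : b = a then none else
        some ⟨⟨(key b h).choose, (key b h).choose_spec.1.1⟩, b, (key b h).choose_spec.1.2, h⟩
      invFun := fun o => Option.rec a (fun x => x.2.1) o
      left_inv := fun b => by
        dsimp only
        by_cases h : b = a
        · rw [dif_pos h]; exact h.symm
        · rw [dif_neg h]
      right_inv := fun o => by
        rcases o with _ | ⟨⟨k, hk⟩, ⟨q, hqk, hqa⟩⟩
        · dsimp only
          rw [dif_pos rfl]
        · dsimp only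
          rw [dif_neg hqa]
          have hek : (key q hqa).choose = k := ((key q hqa).choose_spec.2 k ⟨hk, hqk⟩).symm
          subst hek
          rfl }
  have hlt := af_lines_through ha ho hm a
  have hfinl : Finite {k // J a k} := Nat.finite_of_card_ne_zero (by rw [hlt]; omega)
  have hper : ∀ k : {k // J a k}, Nat.card {q // J q k.1 ∧ q ≠ a} = m - 1 := by
    intro k
    have hfin : Finite {q // J q k.1} := Nat.finite_of_card_ne_zero (by rw [ho k.1]; omega)
    have e2 : {q // J q k.1 ∧ q ≠ a} ≃ {x : {q // J q k.1} // x ≠ ⟨a, k.2⟩} :=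
      { toFun := fun q => ⟨⟨q.1, q.2.1⟩, fun h => q.2.2 (congrArg Subtype.val h)⟩
        invFun := fun x => ⟨x.1.1, x.1.2, fun h => x.2 (Subtype.ext h)⟩
        left_inv := fun q => rfl
        right_inv := fun x => rfl }
    rw [Nat.card_congr e2]
    exact card_ne_one_lower (ho k.1) hm _
  have hsig : Nat.card ((k : {k // J a k}) × {q // J q k.1 ∧ q ≠ a}) = (m + 1) * (m - 1) := by
    rw [card_sigma_const hper (by omega), hlt]
  have hfins : Finite ((k : {k // J a k}) × {q // J q k.1 ∧ q ≠ a}) :=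
    Nat.finite_of_card_ne_zero (by rw [hsig]; exact Nat.mul_ne_zero (by omega) (by omega))
  rw [Nat.card_congr e, card_option', hsig]
  obtain ⟨M, rfl⟩ : ∃ M, m = M + 2 := ⟨m - 2, by omega⟩
  have h1 : M + 2 - 1 = M + 1 := by omega
  rw [h1]; ring

lemma af_card_lines (ha : IsAffinePlane J) (ho : AffOrder J m) (hm : 2 ≤ m) :
    Nat.card L = m * (m + 1) := by
  have hP : Nat.card P = m ^ 2 := af_card_points ha ho hm
  have hfinP : Finite P := Nat.finite_of_card_ne_zero (by rw [hP]; positivity)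
  have h2 : ∀ l : L, ∃ x : {q // J q l}, ∃ y : {q // J q l}, x ≠ y := by
    intro l
    have : Nontrivial {q // J q l} := nontrivial_of_card (ho l) hm
    obtain ⟨x, y, hxy⟩ := this
    exact ⟨x, y, hxy⟩
  choose f g hfg using h2
  have hfinL : Finite L := by
    refine Finite.of_injective (fun l => ((f l).1, (g l).1)) (fun l l' hll => ?_)
    obtain ⟨h1, h2⟩ := Prod.mk.injEq _ _ _ _ ▸ hll
    have hne : (f l).1 ≠ (g l).1 := fun h => hfg l (Subtype.ext h)
    obtain ⟨k, -, hk⟩ := ha.point_line (f l).1 (g l).1 hne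
    have e1 : l = k := hk l ⟨(f l).2, (g l).2⟩
    have e2 : l' = k := hk l' ⟨h1 ▸ (f l').2, h2 ▸ (g l').2⟩
    exact e1.trans e2.symm
  have e : ((l : L) × {q // J q l}) ≃ ((q : P) × {l // J q l}) :=
    { toFun := fun x => ⟨x.2.1, x.1, x.2.2⟩
      invFun := fun x => ⟨x.2.1, x.1, x.2.2⟩
      left_inv := fun x => rfl
      right_inv := fun x => rfl }
  have c1 : Nat.card ((l : L) × {q // J q l}) = Nat.card L * m :=
    card_sigma_const (fun l => ho l) (by omega)
  have c2 : Nat.card ((q : P) × {l // J q l}) = m ^ 2 * (m + 1) := by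
    rw [card_sigma_const (fun q => af_lines_through ha ho hm q) (by omega), hP]
  have : Nat.card L * m = m ^ 2 * (m + 1) := by rw [← c1, Nat.card_congr e, c2]
  have hmm : m ^ 2 * (m + 1) = (m * (m + 1)) * m := by ring
  rw [hmm] at this
  exact Nat.eq_of_mul_eq_mul_right (by omega) this

end AFF

section MainPH

variable {P L P' L' : Type} {I : P → L → Prop} {nP : P → P → Prop} {nL : L → L → Prop}
  {I' : P' → L' → Prop} {φP : P → P'} {φL : L → L'} {m : ℕ}

lemma ph_lift (H : IsPHPlaneWith I nP nL I' φP φL) (p : P) (g : L)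
    (hI : I' (φP p) (φL g)) : ∃ q, nP q p ∧ I q g := by
  obtain ⟨r', hr'⟩ := pp_off_line H.target_proj (φL g)
  have hne : φP p ≠ r' := fun h => hr' (h ▸ hI)
  obtain ⟨k', hk', -⟩ := H.target_proj.point_line (φP p) r' hne
  obtain ⟨k, rfl⟩ := H.φL_surj k'
  obtain ⟨q, hqg, hqk⟩ := H.meet g k
  have h1 : I' (φP q) (φL g) := H.incid_pres q g hqg
  have h2 : I' (φP q) (φL k) := H.incid_pres q k hqk
  have hneq : φL g ≠ φL k := fun h => hr' (h ▸ hk'.2)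
  obtain ⟨w, -, hw⟩ := H.target_proj.line_point (φL g) (φL k) hneq
  have heq : φP q = φP p := (hw (φP q) ⟨h1, h2⟩).trans (hw (φP p) ⟨hI, hk'.1⟩).symm
  exact ⟨q, (H.nP_iff q p).mp heq, hqg⟩

lemma ph_njoin (H : IsPHPlaneWith I nP nL I' φP φL) (x z : P) (hxz : ¬ nP x z) :
    ∃! g, I x g ∧ I z g := by
  obtain ⟨g, hg⟩ := H.join x z
  refine ⟨g, hg, fun y hy => ?_⟩
  by_contra hne
  exact hxz (H.point_nbr x z ⟨y, g, hne, hy.1, hy.2, hg.1, hg.2⟩)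

lemma ph_restr_card (H : IsPHPlaneWith I nP nL I' φP φL) (hnbr : NbrsOnLines I nP m)
    (p : P) (g : L) (q0 : P) (hq0p : nP q0 p) (hq0g : I q0 g) :
    Nat.card {q : P // nP q p ∧ I q g} = m := by
  have e := Equiv.subtypeEquivRight (p := fun q => nP q p ∧ I q g)
    (q := fun q => I q g ∧ nP q0 q) (fun q =>
      ⟨fun h => ⟨h.2, H.nP_equiv.trans hq0p (H.nP_equiv.symm h.1)⟩,
       fun h => ⟨H.nP_equiv.trans (H.nP_equiv.symm h.2) hq0p, h.1⟩⟩)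
  rw [Nat.card_congr e]
  exact hnbr g q0 hq0g

lemma ph_huord (H : IsPHPlaneWith I nP nL I' φP φL) (hnbr : NbrsOnLines I nP m) (p : P) :
    AffOrder (fun (q : {q : P // nP q p}) (s : ↥(NbrLines I nP p)) => (q : P) ∈ (s : Set P)) m := by
  intro s
  obtain ⟨hne, g, hg⟩ := s.2
  obtain ⟨q0, hq0⟩ := hne
  rw [hg] at hq0
  have hgm : ∀ q : P, q ∈ (s : Set P) ↔ (nP q p ∧ I q g) := fun q => by rw [hg]; exact Iff.rfl
  have e : {q : {q : P // nP q p} // (q : P) ∈ (s : Set P)} ≃ {q : P // nP q p ∧ I q g} :=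
    { toFun := fun x => ⟨x.1.1, x.1.2, ((hgm _).mp x.2).2⟩
      invFun := fun y => ⟨⟨y.1, y.2.1⟩, (hgm _).mpr ⟨y.2.1, y.2.2⟩⟩
      left_inv := fun x => rfl
      right_inv := fun y => rfl }
  rw [Nat.card_congr e]
  exact ph_restr_card H hnbr p g q0 hq0.1 hq0.2

lemma ph_nbrpts_card (H : IsPHPlaneWith I nP nL I' φP φL) (hord : ProjOrder I' m)
    (hnbr : NbrsOnLines I nP m) (hu : TwoUniform I nP) (p : P) :
    Nat.card {q : P // nP q p} = m ^ 2 :=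
  af_card_points (hu p).1 (ph_huord H hnbr p) (pp_m2 H.target_proj hord)

lemma ph_nbrln_card (H : IsPHPlaneWith I nP nL I' φP φL) (hord : ProjOrder I' m)
    (hnbr : NbrsOnLines I nP m) (hu : TwoUniform I nP) (p : P) :
    Nat.card ↥(NbrLines I nP p) = m * (m + 1) :=
  af_card_lines (hu p).1 (ph_huord H hnbr p) (pp_m2 H.target_proj hord)

lemma ph_fiber_card (H : IsPHPlaneWith I nP nL I' φP φL) (hord : ProjOrder I' m)
    (hnbr : NbrsOnLines I nP m) (hu : TwoUniform I nP) (p' : P') :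
    Nat.card {q : P // φP q = p'} = m ^ 2 := by
  obtain ⟨rp, hrp⟩ := H.φP_surj p'
  have e := Equiv.subtypeEquivRight (p := fun q => φP q = p') (q := fun q => nP q rp)
    (fun q => by rw [← hrp]; exact H.nP_iff q rp)
  rw [Nat.card_congr e]
  exact ph_nbrpts_card H hord hnbr hu rp

lemma ph_img_line (H : IsPHPlaneWith I nP nL I' φP φL) {l' : L'} {p1' p2' : P'}
    (h1' : I' p1' l') (h2' : I' p2' l') (hne : p1' ≠ p2') {x z : P}
    (hx : φP x = p1') (hz : φP z = p2') {g : L} (hxg : I x g) (hzg : I z g) :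
    φL g = l' := by
  obtain ⟨k', -, hk'⟩ := H.target_proj.point_line p1' p2' hne
  have e1 : φL g = k' := hk' (φL g) ⟨hx ▸ H.incid_pres x g hxg, hz ▸ H.incid_pres z g hzg⟩
  have e2 : l' = k' := hk' l' ⟨h1', h2'⟩
  exact e1.trans e2.symm

lemma ph_nonnbr (H : IsPHPlaneWith I nP nL I' φP φL) {x z : P} (hne : φP x ≠ φP z) :
    ¬ nP x z := fun h => hne ((H.nP_iff x z).mpr h)

end MainPH

section MainPH2

variable {P L P' L' : Type} {I : P → L → Prop} {nP : P → P → Prop} {nL : L → L → Prop}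
  {I' : P' → L' → Prop} {φP : P → P'} {φL : L → L'} {m : ℕ}

/-- The number of lines through a fixed point `z` over `p2'` mapping to `l'` is `m`. -/
lemma ph_count_aux (H : IsPHPlaneWith I nP nL I' φP φL) (hord : ProjOrder I' m)
    (hnbr : NbrsOnLines I nP m) (hu : TwoUniform I nP)
    {l' : L'} {p1' p2' : P'} (h1' : I' p1' l') (h2' : I' p2' l') (hne : p1' ≠ p2')
    {z : P} (hz : φP z = p2') :
    Nat.card {g : L // I z g ∧ φL g = l'} = m := by
  have hm2 : 2 ≤ m := pp_m2 H.target_proj hord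
  have hjoin : ∀ x : {x : P // φP x = p1'}, ∃ g : L,
      ((I x.1 g ∧ I z g) ∧ φL g = l') ∧ ∀ y, I x.1 y → I z y → y = g := by
    intro x
    obtain ⟨g, hg, hgu⟩ := ph_njoin H x.1 z (ph_nonnbr H (by rw [x.2, hz]; exact hne))
    exact ⟨g, ⟨hg, ph_img_line H h1' h2' hne x.2 hz hg.1 hg.2⟩, fun y h1 h2 => hgu y ⟨h1, h2⟩⟩
  choose jf hjf hjfu using hjoin
  set f : {x : P // φP x = p1'} → {g : L // I z g ∧ φL g = l'} :=
    fun x => ⟨jf x, (hjf x).1.2, (hjf x).2⟩ with hf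
  have hsurj : Function.Surjective f := by
    rintro ⟨g, hzg, hgl⟩
    obtain ⟨rp, hrp⟩ := H.φP_surj p1'
    obtain ⟨q, hqr, hqg⟩ := ph_lift H rp g (by rw [hrp, hgl]; exact h1')
    have hq1 : φP q = p1' := ((H.nP_iff q rp).mpr hqr).trans hrp
    exact ⟨⟨q, hq1⟩, Subtype.ext ((hjfu ⟨q, hq1⟩ g hqg hzg).symm)⟩
  have hfib : ∀ gT : {g : L // I z g ∧ φL g = l'},
      Nat.card {x : {x : P // φP x = p1'} // f x = gT} = m := by
    intro gT
    obtain ⟨rp, hrp⟩ := H.φP_surj p1'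
    obtain ⟨q0, hq0r, hq0g⟩ := ph_lift H rp gT.1 (by rw [hrp, gT.2.2]; exact h1')
    have e : {x : {x : P // φP x = p1'} // f x = gT} ≃ {q : P // nP q rp ∧ I q gT.1} :=
      { toFun := fun x => ⟨x.1.1, (H.nP_iff _ _).mp (by rw [hrp]; exact x.1.2),
          by have := congrArg Subtype.val x.2
             exact this ▸ (hjf x.1).1.1⟩
        invFun := fun q => ⟨⟨q.1, ((H.nP_iff q.1 rp).mpr q.2.1).trans hrp⟩,
          Subtype.ext ((hjfu _ gT.1 q.2.2 gT.2.1).symm)⟩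
        left_inv := fun x => by
          apply Subtype.ext; apply Subtype.ext; rfl
        right_inv := fun q => by
          apply Subtype.ext; rfl }
    rw [Nat.card_congr e]
    exact ph_restr_card H hnbr rp gT.1 q0 hq0r hq0g
  have hdom : Nat.card {x : P // φP x = p1'} = m ^ 2 := ph_fiber_card H hord hnbr hu p1'
  have hfin : Finite {x : P // φP x = p1'} :=
    Nat.finite_of_card_ne_zero (by rw [hdom]; exact (Nat.pow_pos (by omega : 0 < m)).ne')
  have hcf := card_of_fibers f (k := m) (by omega) hsurj hfib
  rw [hdom] at hcf
  have hmm : m ^ 2 = m * m := by ring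
  rw [hmm] at hcf
  exact Nat.eq_of_mul_eq_mul_right (by omega) hcf.symm

lemma ph_F_card (H : IsPHPlaneWith I nP nL I' φP φL) (hord : ProjOrder I' m)
    (hnbr : NbrsOnLines I nP m) (hu : TwoUniform I nP) (l' : L') :
    Nat.card {g : L // φL g = l'} = m ^ 2 := by
  have hm2 : 2 ≤ m := pp_m2 H.target_proj hord
  have : Nontrivial {p' : P' // I' p' l'} := nontrivial_of_card (hord l') (by omega)
  obtain ⟨⟨p1', h1'⟩, ⟨p2', h2'⟩, hne'⟩ := this
  have hne : p1' ≠ p2' := fun h => hne' (Subtype.ext h)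
  set α := ({x : P // φP x = p1'} × {z : P // φP z = p2'}) with hα
  have hjoin : ∀ a : α, ∃ g : L,
      ((I a.1.1 g ∧ I a.2.1 g) ∧ φL g = l') ∧ ∀ y, I a.1.1 y → I a.2.1 y → y = g := by
    intro a
    obtain ⟨g, hg, hgu⟩ := ph_njoin H a.1.1 a.2.1 (ph_nonnbr H (by rw [a.1.2, a.2.2]; exact hne))
    exact ⟨g, ⟨hg, ph_img_line H h1' h2' hne a.1.2 a.2.2 hg.1 hg.2⟩, fun y u v => hgu y ⟨u, v⟩⟩
  choose jf hjf hjfu using hjoin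
  set f : α → {g : L // φL g = l'} := fun a => ⟨jf a, (hjf a).2⟩ with hf
  have hsurj : Function.Surjective f := by
    rintro ⟨g, hgl⟩
    obtain ⟨rp1, hrp1⟩ := H.φP_surj p1'
    obtain ⟨rp2, hrp2⟩ := H.φP_surj p2'
    obtain ⟨x, hxr, hxg⟩ := ph_lift H rp1 g (by rw [hrp1, hgl]; exact h1')
    obtain ⟨z, hzr, hzg⟩ := ph_lift H rp2 g (by rw [hrp2, hgl]; exact h2')
    refine ⟨(⟨x, ((H.nP_iff x rp1).mpr hxr).trans hrp1⟩, ⟨z, ((H.nP_iff z rp2).mpr hzr).trans hrp2⟩),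
      Subtype.ext ((hjfu _ g hxg hzg).symm)⟩
  have hfib : ∀ gF : {g : L // φL g = l'},
      Nat.card {a : α // f a = gF} = m * m := by
    intro gF
    obtain ⟨rp1, hrp1⟩ := H.φP_surj p1'
    obtain ⟨rp2, hrp2⟩ := H.φP_surj p2'
    obtain ⟨x0, hx0r, hx0g⟩ := ph_lift H rp1 gF.1 (by rw [hrp1, gF.2]; exact h1')
    obtain ⟨z0, hz0r, hz0g⟩ := ph_lift H rp2 gF.1 (by rw [hrp2, gF.2]; exact h2')
    have e : {a : α // f a = gF} ≃
        ({q : P // nP q rp1 ∧ I q gF.1} × {q : P // nP q rp2 ∧ I q gF.1}) :=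
      { toFun := fun a =>
          (⟨a.1.1.1, (H.nP_iff _ _).mp (by rw [hrp1]; exact a.1.1.2),
            by have := congrArg Subtype.val a.2; exact this ▸ (hjf a.1).1.1⟩,
           ⟨a.1.2.1, (H.nP_iff _ _).mp (by rw [hrp2]; exact a.1.2.2),
            by have := congrArg Subtype.val a.2; exact this ▸ (hjf a.1).1.2⟩)
        invFun := fun q =>
          ⟨(⟨q.1.1, ((H.nP_iff _ rp1).mpr q.1.2.1).trans hrp1⟩,
            ⟨q.2.1, ((H.nP_iff _ rp2).mpr q.2.2.1).trans hrp2⟩),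
            Subtype.ext ((hjfu _ gF.1 q.1.2.2 q.2.2.2).symm)⟩
        left_inv := fun a => by
          apply Subtype.ext
          apply Prod.ext <;> (apply Subtype.ext; rfl)
        right_inv := fun q => by
          apply Prod.ext <;> (apply Subtype.ext; rfl) }
    rw [Nat.card_congr e, Nat.card_prod]
    rw [ph_restr_card H hnbr rp1 gF.1 x0 hx0r hx0g, ph_restr_card H hnbr rp2 gF.1 z0 hz0r hz0g]
  have hdom : Nat.card α = m ^ 2 * m ^ 2 := by
    rw [hα, Nat.card_prod, ph_fiber_card H hord hnbr hu p1', ph_fiber_card H hord hnbr hu p2']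
  have hfin : Finite α := Nat.finite_of_card_ne_zero (by
    rw [hdom]
    exact (Nat.mul_pos (Nat.pow_pos (by omega : 0 < m)) (Nat.pow_pos (by omega : 0 < m))).ne')
  have hkey := card_of_fibers f (k := m * m) (Nat.mul_pos (by omega : 0 < m) (by omega : 0 < m)).ne'
    hsurj hfib
  rw [hdom] at hkey
  have h1 : m ^ 2 * m ^ 2 = m ^ 2 * (m * m) := by ring
  rw [h1] at hkey
  exact Nat.eq_of_mul_eq_mul_right (Nat.mul_pos (by omega : 0 < m) (by omega : 0 < m)) hkey.symm

lemma ph_n_eq (H : IsPHPlaneWith I nP nL I' φP φL) (hord : ProjOrder I' m)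
    (hnbr : NbrsOnLines I nP m) (hu : TwoUniform I nP) (p : P)
    (s : ↥(NbrLines I nP p)) :
    Nat.card {g : L // {q : P | nP q p ∧ I q g} = (s : Set P)} = m := by
  have hm2 : 2 ≤ m := pp_m2 H.target_proj hord
  obtain ⟨n, hn⟩ := (hu p).2
  suffices hnm : n = m by rw [← hnm]; exact hn s
  set α := {g : L // ∃ q, nP q p ∧ I q g} with hαdef
  set F : α → {l'' : L' // I' (φP p) l''} := fun g => ⟨φL g.1, by
    obtain ⟨q, hq, hqg⟩ := g.2
    have h1 := H.incid_pres q g.1 hqg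
    rwa [(H.nP_iff q p).mpr hq] at h1⟩ with hF
  have eFa : ∀ l'' : {l'' : L' // I' (φP p) l''},
      {a : α // F a = l''} ≃ {g : L // φL g = l''.1} := fun l'' =>
    { toFun := fun a => ⟨a.1.1, congrArg Subtype.val a.2⟩
      invFun := fun g => ⟨⟨g.1, by
        obtain ⟨q, hq, hqg⟩ := ph_lift H p g.1 (by rw [g.2]; exact l''.2)
        exact ⟨q, hq, hqg⟩⟩, Subtype.ext g.2⟩
      left_inv := fun a => Subtype.ext (Subtype.ext rfl)
      right_inv := fun g => Subtype.ext rfl }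
  have e_a : α ≃ ((l'' : {l'' : L' // I' (φP p) l''}) × {g : L // φL g = l''.1}) :=
    (Equiv.sigmaFiberEquiv F).symm.trans (Equiv.sigmaCongrRight eFa)
  set G : α → ↥(NbrLines I nP p) := fun g => ⟨{q : P | nP q p ∧ I q g.1}, g.2, g.1, rfl⟩ with hG
  have eFb : ∀ t : ↥(NbrLines I nP p),
      {a : α // G a = t} ≃ {g : L // {q : P | nP q p ∧ I q g} = (t : Set P)} := fun t =>
    { toFun := fun a => ⟨a.1.1, congrArg Subtype.val a.2⟩
      invFun := fun g => ⟨⟨g.1, by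
        obtain ⟨⟨q0, hq0⟩, -⟩ := t.2
        have hq0' : q0 ∈ {q : P | nP q p ∧ I q g.1} := by rw [g.2]; exact hq0
        exact ⟨q0, hq0'⟩⟩, Subtype.ext g.2⟩
      left_inv := fun a => Subtype.ext (Subtype.ext rfl)
      right_inv := fun g => Subtype.ext rfl }
  have e_b : α ≃ ((t : ↥(NbrLines I nP p)) × {g : L // {q : P | nP q p ∧ I q g} = (t : Set P)}) :=
    (Equiv.sigmaFiberEquiv G).symm.trans (Equiv.sigmaCongrRight eFb)
  have hfinidx : Finite {l'' : L' // I' (φP p) l''} :=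
    Nat.finite_of_card_ne_zero (by rw [pp_lines_through H.target_proj hord (φP p)]; omega)
  have c_a : Nat.card α = (m + 1) * m ^ 2 := by
    rw [Nat.card_congr e_a,
      card_sigma_const (ι := {l'' : L' // I' (φP p) l''}) (β := fun l'' => {g : L // φL g = l''.1})
        (fun l'' => ph_F_card H hord hnbr hu l''.1) (Nat.pow_pos (by omega : 0 < m)).ne',
      pp_lines_through H.target_proj hord (φP p)]
  have hfinα : Finite α := Nat.finite_of_card_ne_zero (by
    rw [c_a]
    exact (Nat.mul_pos (by omega : 0 < m + 1) (Nat.pow_pos (by omega : 0 < m))).ne')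
  have hnz : n ≠ 0 := by
    intro hn0
    have hne : Nonempty α := nonempty_of_card c_a
      (Nat.mul_pos (by omega : 0 < m + 1) (Nat.pow_pos (by omega : 0 < m))).ne'
    obtain ⟨a⟩ := hne
    set x := e_b a with hx
    have hfinfib : Finite {g : L // {q : P | nP q p ∧ I q g} = (x.1 : Set P)} := by
      refine Finite.of_injective (fun g => (⟨g.1, ?_⟩ : α)) ?_
      · obtain ⟨⟨q0, hq0⟩, -⟩ := x.1.2
        have : q0 ∈ {q : P | nP q p ∧ I q g.1} := by rw [g.2]; exact hq0
        exact ⟨q0, this⟩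
      · intro g g' h
        have h2 := congrArg (fun a : α => a.1) h
        exact Subtype.ext h2
    have : Nat.card {g : L // {q : P | nP q p ∧ I q g} = (x.1 : Set P)} = 0 := by
      rw [hn x.1]; exact hn0
    have hne2 : Nonempty {g : L // {q : P | nP q p ∧ I q g} = (x.1 : Set P)} := ⟨x.2⟩
    rw [Nat.card_eq_zero] at this
    rcases this with h | h
    · exact h.elim (Classical.choice hne2)
    · exact @not_finite _ h hfinfib
  have hfinNL : Finite ↥(NbrLines I nP p) :=
    Nat.finite_of_card_ne_zero (by
      rw [ph_nbrln_card H hord hnbr hu p]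
      exact (Nat.mul_pos (by omega : 0 < m) (by omega : 0 < m + 1)).ne')
  have c_b : Nat.card α = (m * (m + 1)) * n := by
    rw [Nat.card_congr e_b,
      card_sigma_const (ι := ↥(NbrLines I nP p))
        (β := fun t => {g : L // {q : P | nP q p ∧ I q g} = (t : Set P)})
        (fun t => hn t) hnz,
      ph_nbrln_card H hord hnbr hu p]
  rw [c_b] at c_a
  have h2 : (m + 1) * m ^ 2 = (m * (m + 1)) * m := by ring
  rw [h2] at c_a
  exact Nat.eq_of_mul_eq_mul_left (Nat.mul_pos (by omega : 0 < m) (by omega : 0 < m + 1)) c_a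

end MainPH2

section MainPH3

variable {P L P' L' : Type} {I : P → L → Prop} {nP : P → P → Prop} {nL : L → L → Prop}
  {I' : P' → L' → Prop} {φP : P → P'} {φL : L → L'} {m : ℕ}

/-- The labelled parallel class at `p` attached to the line-class `l'`. -/
def PiSub {P L L' : Type} (I : P → L → Prop) (nP : P → P → Prop) (φL : L → L')
    (p : P) (l' : L') : Set ↥(NbrLines I nP p) :=
  {s | ∃ g, φL g = l' ∧ (s : Set P) = {q | nP q p ∧ I q g}}

lemma ph_Pi_card (H : IsPHPlaneWith I nP nL I' φP φL) (hord : ProjOrder I' m)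
    (hnbr : NbrsOnLines I nP m) (hu : TwoUniform I nP) {p : P} {l' : L'}
    (hp : I' (φP p) l') : Nat.card ↥(PiSub I nP φL p l') = m := by
  have hm2 : 2 ≤ m := pp_m2 H.target_proj hord
  have hmemN : ∀ g : {g : L // φL g = l'}, {q | nP q p ∧ I q g.1} ∈ NbrLines I nP p := by
    intro g
    refine ⟨?_, g.1, rfl⟩
    obtain ⟨q, hq⟩ := ph_lift H p g.1 (by rw [g.2]; exact hp)
    exact ⟨q, hq⟩
  set ρ : {g : L // φL g = l'} → ↥(PiSub I nP φL p l') :=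
    fun g => ⟨⟨{q | nP q p ∧ I q g.1}, hmemN g⟩, ⟨g.1, g.2, rfl⟩⟩ with hρ
  have hsurj : Function.Surjective ρ := by
    rintro ⟨⟨s, hsN⟩, g, hgl, hgs⟩
    exact ⟨⟨g, hgl⟩, Subtype.ext (Subtype.ext hgs.symm)⟩
  have hfib : ∀ s : ↥(PiSub I nP φL p l'), Nat.card {g : {g : L // φL g = l'} // ρ g = s} = m := by
    intro s
    have e : {gF : {g : L // φL g = l'} // ρ gF = s} ≃
        {g : L // {q : P | nP q p ∧ I q g} = ((s : ↥(NbrLines I nP p)) : Set P)} :=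
      { toFun := fun gF => ⟨gF.1.1, congrArg Subtype.val (congrArg Subtype.val gF.2)⟩
        invFun := fun g => by
          refine ⟨⟨g.1, ?_⟩, Subtype.ext (Subtype.ext g.2)⟩
          obtain ⟨g₁, hg₁l, hg₁s⟩ := s.2
          obtain ⟨q0m, hq0m⟩ := s.1.2.1
          have hq0 : nP q0m p ∧ I q0m g₁ := by rw [hg₁s] at hq0m; exact hq0m
          have hcard : Nat.card {q : P // nP q p ∧ I q g₁} = m :=
            ph_restr_card H hnbr p g₁ q0m hq0.1 hq0.2
          have : Nontrivial {q : P // nP q p ∧ I q g₁} := nontrivial_of_card hcard hm2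
          obtain ⟨x, y, hxy⟩ := this
          have hxyv : x.1 ≠ y.1 := fun h => hxy (Subtype.ext h)
          have hxg : x.1 ∈ {q : P | nP q p ∧ I q g.1} := by
            rw [g.2, hg₁s]; exact x.2
          have hyg : y.1 ∈ {q : P | nP q p ∧ I q g.1} := by
            rw [g.2, hg₁s]; exact y.2
          have hnl : nL g.1 g₁ :=
            H.line_nbr g.1 g₁ ⟨x.1, y.1, hxyv, hxg.2, x.2.2, hyg.2, y.2.2⟩
          exact ((H.nL_iff g.1 g₁).mpr hnl).trans hg₁l
        left_inv := fun gF => Subtype.ext (Subtype.ext rfl)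
        right_inv := fun g => Subtype.ext rfl }
    rw [Nat.card_congr e]
    exact ph_n_eq H hord hnbr hu p s.1
  have hfinF : Finite {g : L // φL g = l'} := Nat.finite_of_card_ne_zero
    (by rw [ph_F_card H hord hnbr hu l']; exact (Nat.pow_pos (by omega : 0 < m)).ne')
  have hcf := card_of_fibers ρ (k := m) (by omega) hsurj hfib
  rw [ph_F_card H hord hnbr hu l'] at hcf
  have hmm : m ^ 2 = m * m := by ring
  rw [hmm] at hcf
  exact Nat.eq_of_mul_eq_mul_right (by omega) hcf.symm

lemma ph_Pi_parallel (H : IsPHPlaneWith I nP nL I' φP φL) (hord : ProjOrder I' m)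
    (hnbr : NbrsOnLines I nP m) (hu : TwoUniform I nP) {p : P} {l' : L'}
    (hp : I' (φP p) l') :
    ∃ s0 ∈ PiSub I nP φL p l', PiSub I nP φL p l' =
      {t : ↥(NbrLines I nP p) |
        Parallel (fun (q : {q : P // nP q p}) (s : ↥(NbrLines I nP p)) =>
          (q : P) ∈ (s : Set P)) s0 t} := by
  have hm2 : 2 ≤ m := pp_m2 H.target_proj hord
  have : Nontrivial {q' : P' // I' q' l'} := nontrivial_of_card (hord l') (by omega)
  obtain ⟨p2'el, hne2⟩ := exists_ne (⟨φP p, hp⟩ : {q' : P' // I' q' l'})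
  have hnep : p2'el.1 ≠ φP p := fun h => hne2 (Subtype.ext h)
  obtain ⟨z, hz⟩ := H.φP_surj p2'el.1
  have hnonz : ∀ x : P, nP x p → ¬ nP x z := by
    intro x hx h
    have e1 := (H.nP_iff x z).mpr h
    have e2 := (H.nP_iff x p).mpr hx
    rw [hz] at e1
    exact hnep (e1.symm.trans e2)
  have hT : Nat.card {g : L // I z g ∧ φL g = l'} = m :=
    ph_count_aux H hord hnbr hu hp p2'el.2 (Ne.symm hnep) hz
  have hmemN : ∀ g : {g : L // I z g ∧ φL g = l'},
      {q | nP q p ∧ I q g.1} ∈ NbrLines I nP p := by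
    intro g
    refine ⟨?_, g.1, rfl⟩
    obtain ⟨q, hq⟩ := ph_lift H p g.1 (by rw [g.2.2]; exact hp)
    exact ⟨q, hq⟩
  set rT : {g : L // I z g ∧ φL g = l'} → ↥(NbrLines I nP p) :=
    fun g => ⟨{q | nP q p ∧ I q g.1}, hmemN g⟩ with hrT
  have hrTmem : ∀ g, rT g ∈ PiSub I nP φL p l' := fun g => ⟨g.1, g.2.2, rfl⟩
  have hdisjT : ∀ g g', g ≠ g' → ∀ q : P,
      ¬(q ∈ (rT g : Set P) ∧ q ∈ (rT g' : Set P)) := by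
    intro g g' hgg q hq
    have hq1 : nP q p ∧ I q g.1 := hq.1
    have hq2 : nP q p ∧ I q g'.1 := hq.2
    obtain ⟨j, -, hju⟩ := ph_njoin H q z (hnonz q hq1.1)
    exact hgg (Subtype.ext ((hju g.1 ⟨hq1.2, g.2.1⟩).trans (hju g'.1 ⟨hq2.2, g'.2.1⟩).symm))
  have hinj : Function.Injective rT := by
    intro g g' h
    by_contra hne
    obtain ⟨q, hq⟩ := (hmemN g).1
    exact hdisjT g g' hne q ⟨hq, h ▸ hq⟩
  have hcov : ∀ x : P, nP x p → ∃ g : {g : L // I z g ∧ φL g = l'},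
      x ∈ (rT g : Set P) := by
    intro x hx
    obtain ⟨j, hj, -⟩ := ph_njoin H x z (hnonz x hx)
    have hjl : φL j = l' :=
      ph_img_line H hp p2'el.2 (Ne.symm hnep) ((H.nP_iff x p).mpr hx) hz hj.1 hj.2
    exact ⟨⟨j, hj.2, hjl⟩, ⟨hx, hj.1⟩⟩
  have hcardPi : Nat.card ↥(PiSub I nP φL p l') = m := ph_Pi_card H hord hnbr hu hp
  have hcardR : Nat.card ↥(Set.range rT) = m := by
    rw [← Nat.card_congr (Equiv.ofInjective rT hinj)]
    exact hT
  have hfinPi : Finite ↥(PiSub I nP φL p l') :=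
    Nat.finite_of_card_ne_zero (by rw [hcardPi]; omega)
  have hrange_sub : Set.range rT ⊆ PiSub I nP φL p l' := by
    rintro t ⟨g, rfl⟩
    exact hrTmem g
  have hΛ : Set.range rT = PiSub I nP φL p l' :=
    Set.eq_of_subset_of_ncard_le hrange_sub
      (by rw [← Nat.card_coe_set_eq, ← Nat.card_coe_set_eq, hcardPi, hcardR])
      (Set.toFinite _)
  have hpair : ∀ s t : ↥(NbrLines I nP p), s ∈ PiSub I nP φL p l' →
      t ∈ PiSub I nP φL p l' →
      s = t ∨ ∀ q : P, ¬(q ∈ (s : Set P) ∧ q ∈ (t : Set P)) := by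
    intro s t hs ht
    rw [← hΛ] at hs ht
    obtain ⟨g, rfl⟩ := hs
    obtain ⟨g', rfl⟩ := ht
    by_cases hgg : g = g'
    · exact Or.inl (congrArg rT hgg)
    · exact Or.inr (hdisjT g g' hgg)
  obtain ⟨s0⟩ := nonempty_of_card hcardPi (by omega)
  refine ⟨s0.1, s0.2, ?_⟩
  ext t
  constructor
  · intro ht
    rcases hpair s0.1 t s0.2 ht with he | hd
    · exact Or.inl he
    · exact Or.inr (fun q hq => hd q.1 hq)
  · intro ht
    rcases ht with he | hd
    · rw [← he]; exact s0.2
    · obtain ⟨⟨x0, hx0mem⟩, gt, hgt⟩ := t.2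
      have hx0p : nP x0 p := by
        have := hx0mem
        rw [hgt] at this
        exact this.1
      obtain ⟨gv, hxv⟩ := hcov x0 hx0p
      by_cases hvs : rT gv = s0.1
      · exact absurd ⟨hvs ▸ hxv, hx0mem⟩ (hd ⟨x0, hx0p⟩)
      · have hx0ns0 : ¬ ((⟨x0, hx0p⟩ : {q : P // nP q p}) : P) ∈ ((s0.1 : ↥(NbrLines I nP p)) : Set P) :=
          fun h => hd ⟨x0, hx0p⟩ ⟨h, hx0mem⟩
        obtain ⟨w, -, hw⟩ := (hu p).1.playfair ⟨x0, hx0p⟩ s0.1 hx0ns0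
        have ht_eq : t = w := hw t ⟨hx0mem, fun q hq => hd q hq⟩
        have hv_eq : rT gv = w := by
          refine hw (rT gv) ⟨hxv, ?_⟩
          intro q hq
          rcases hpair s0.1 (rT gv) s0.2 (hrTmem gv) with he2 | hd2
          · exact hvs he2.symm
          · exact hd2 q.1 hq
        rw [ht_eq, ← hv_eq]
        exact hrTmem gv

lemma ph_OA (H : IsPHPlaneWith I nP nL I' φP φL) (hord : ProjOrder I' m)
    (hnbr : NbrsOnLines I nP m) (hu : TwoUniform I nP) {l' : L'} {p1 p2 : P}
    (h1 : I' (φP p1) l') (h2 : I' (φP p2) l') (hne : φP p1 ≠ φP p2)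
    (ρ1 : {g : L // φL g = l'} → ↥(PiSub I nP φL p1 l'))
    (hρ1 : ∀ g, (((ρ1 g : ↥(NbrLines I nP p1))) : Set P) = {q | nP q p1 ∧ I q g.1})
    (ρ2 : {g : L // φL g = l'} → ↥(PiSub I nP φL p2 l'))
    (hρ2 : ∀ g, (((ρ2 g : ↥(NbrLines I nP p2))) : Set P) = {q | nP q p2 ∧ I q g.1}) :
    Function.Bijective (fun g => (ρ1 g, ρ2 g)) := by
  have hm2 : 2 ≤ m := pp_m2 H.target_proj hord
  have f1 : Finite ↥(PiSub I nP φL p1 l') :=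
    Nat.finite_of_card_ne_zero (by rw [ph_Pi_card H hord hnbr hu h1]; omega)
  have f2 : Finite ↥(PiSub I nP φL p2 l') :=
    Nat.finite_of_card_ne_zero (by rw [ph_Pi_card H hord hnbr hu h2]; omega)
  refine (Nat.bijective_iff_injective_and_card _).mpr ⟨?_, ?_⟩
  · intro g g' hgg
    have hgg' : (ρ1 g, ρ2 g) = (ρ1 g', ρ2 g') := hgg
    have hf : ρ1 g = ρ1 g' := congrArg Prod.fst hgg'
    have hs : ρ2 g = ρ2 g' := congrArg Prod.snd hgg'
    have e1 : {q : P | nP q p1 ∧ I q g.1} = {q : P | nP q p1 ∧ I q g'.1} := by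
      rw [← hρ1 g, ← hρ1 g', hf]
    have e2 : {q : P | nP q p2 ∧ I q g.1} = {q : P | nP q p2 ∧ I q g'.1} := by
      rw [← hρ2 g, ← hρ2 g', hs]
    obtain ⟨x, hx⟩ := ph_lift H p1 g.1 (by rw [g.2]; exact h1)
    obtain ⟨zz, hzz⟩ := ph_lift H p2 g.1 (by rw [g.2]; exact h2)
    have hxg' : I x g'.1 := by
      have hmem : x ∈ {q : P | nP q p1 ∧ I q g'.1} := e1 ▸ (show x ∈ {q : P | nP q p1 ∧ I q g.1} from hx)
      exact hmem.2
    have hzg' : I zz g'.1 := by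
      have hmem : zz ∈ {q : P | nP q p2 ∧ I q g'.1} := e2 ▸ (show zz ∈ {q : P | nP q p2 ∧ I q g.1} from hzz)
      exact hmem.2
    have hnxz : ¬ nP x zz := ph_nonnbr H (by
      rw [(H.nP_iff x p1).mpr hx.1, (H.nP_iff zz p2).mpr hzz.1]
      exact hne)
    obtain ⟨j, -, hju⟩ := ph_njoin H x zz hnxz
    exact Subtype.ext ((hju g.1 ⟨hx.2, hzz.2⟩).trans (hju g'.1 ⟨hxg', hzg'⟩).symm)
  · rw [ph_F_card H hord hnbr hu l', Nat.card_prod,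
      ph_Pi_card H hord hnbr hu h1, ph_Pi_card H hord hnbr hu h2]
    ring

end MainPH3

/-- Every 2-uniform `(m, m)` projective Hjelmslev plane is isomorphic, as an
incidence structure, to the structure produced by the Hjelmslev construction from suitable
data (a projective plane of order `m`, affine planes of order `m`, orthogonal arrays
`OA(2, m+1, m)`, and admissible labeled parallel classes). -/
theorem every_2uniform_PH_plane_from_construction {P L : Type} (m : ℕ)
    (I : P → L → Prop) (nP : P → P → Prop) (nL : L → L → Prop)
    (h : IsTRPHPlane I nP nL m m) (hu : TwoUniform I nP) :
    ∃ (D : PHData m) (eP : P ≃ D.HPt) (eL : L ≃ D.HLn),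
      ∀ (p : P) (l : L), I p l ↔ D.HI (eP p) (eL l) := by
  classical
  obtain ⟨P', L', I', φP, φL, H, hord, hnbr⟩ := h
  choose rep hrep using H.φP_surj
  have hm2 : 2 ≤ m := pp_m2 H.target_proj hord
  have hprep : ∀ p : P, nP p (rep (φP p)) :=
    fun p => (H.nP_iff p (rep (φP p))).mp (hrep (φP p)).symm
  have hmemN : ∀ (p' : P') (l' : L') (g : L), φL g = l' → I' p' l' →
      ({q : P | nP q (rep p') ∧ I q g} ∈ NbrLines I nP (rep p')) := by
    intro p' l' g hg h'
    refine ⟨?_, g, rfl⟩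
    obtain ⟨q, hq⟩ := ph_lift H (rep p') g (by rw [hrep, hg]; exact h')
    exact ⟨q, hq⟩
  have hmemPi : ∀ (p' : P') (l' : L') (g : L) (hg : φL g = l') (h' : I' p' l'),
      (⟨{q : P | nP q (rep p') ∧ I q g}, hmemN p' l' g hg h'⟩ : ↥(NbrLines I nP (rep p')))
        ∈ PiSub I nP φL (rep p') l' := fun p' l' g hg h' => ⟨g, hg, rfl⟩
  have hEQ : ∀ (p' : P') (l' : L') (_ : I' p' l'),
      Nonempty ((Fin m) ≃ ↥(PiSub I nP φL (rep p') l')) := by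
    intro p' l' h'
    have hc : Nat.card ↥(PiSub I nP φL (rep p') l') = m :=
      ph_Pi_card H hord hnbr hu (by rw [hrep]; exact h')
    rcases finOfCard hc (by omega) with ⟨e⟩
    exact ⟨e.symm⟩
  have eqv : ∀ (p' : P') (l' : L') (_ : I' p' l'),
      (Fin m) ≃ ↥(PiSub I nP φL (rep p') l') :=
    fun p' l' h' => Classical.choice (hEQ p' l' h')
  have hrange : ∀ (p' : P') (l' : L') (h' : I' p' l'),
      Set.range (fun s : Fin m =>
        ((eqv p' l' h' s : ↥(PiSub I nP φL (rep p') l')) : ↥(NbrLines I nP (rep p'))))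
        = PiSub I nP φL (rep p') l' := by
    intro p' l' h'
    ext t
    constructor
    · rintro ⟨s, rfl⟩
      exact (eqv p' l' h' s).2
    · intro ht
      refine ⟨(eqv p' l' h').symm ⟨t, ht⟩, ?_⟩
      simp only [Equiv.apply_symm_apply]
  refine ⟨{
      Pt := P'
      Ln := L'
      I := I'
      proj := H.target_proj
      ord := hord
      APt := fun p' => {q : P // nP q (rep p')}
      ALn := fun p' => ↥(NbrLines I nP (rep p'))
      AI := fun p' a s => (a : P) ∈ (s : Set P)
      aff := fun p' => (hu (rep p')).1
      aord := fun p' => ph_huord H hnbr (rep p')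
      Row := fun l' => {g : L // φL g = l'}
      Sym := fun _ => Fin m
      row_card := fun l' => ph_F_card H hord hnbr hu l'
      sym_card := fun l' => by rw [Nat.card_eq_fintype_card, Fintype.card_fin]
      O := fun l' r c => (eqv c.1 l' c.2).symm
        ⟨⟨{q : P | nP q (rep c.1) ∧ I q r.1}, hmemN c.1 l' r.1 r.2 c.2⟩,
          hmemPi c.1 l' r.1 r.2 c.2⟩
      oa := ?_
      C := fun p' l' h' s =>
        ((eqv p' l' h' s : ↥(PiSub I nP φL (rep p') l')) : ↥(NbrLines I nP (rep p')))
      C_inj := fun p' l' h' => Subtype.val_injective.comp (eqv p' l' h').injective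
      C_class := ?_
      C_distinct := ?_ },
    (Equiv.sigmaFiberEquiv φP).symm.trans (Equiv.sigmaCongrRight (fun p' =>
      Equiv.subtypeEquivRight (fun q =>
        ⟨fun hq => (H.nP_iff q (rep p')).mp (hq.trans (hrep p').symm),
         fun hq => ((H.nP_iff q (rep p')).mpr hq).trans (hrep p')⟩))),
    (Equiv.sigmaFiberEquiv φL).symm,
    ?_⟩
  · -- oa
    intro l' c1 c2 hc
    have hc' : c1.1 ≠ c2.1 := fun hh => hc (Subtype.ext hh)
    have h1 : I' (φP (rep c1.1)) l' := by rw [hrep]; exact c1.2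
    have h2 : I' (φP (rep c2.1)) l' := by rw [hrep]; exact c2.2
    have hnev : φP (rep c1.1) ≠ φP (rep c2.1) := by rw [hrep, hrep]; exact hc'
    have hbij := ph_OA H hord hnbr hu h1 h2 hnev
      (fun g => ⟨⟨_, hmemN c1.1 l' g.1 g.2 c1.2⟩, hmemPi c1.1 l' g.1 g.2 c1.2⟩) (fun g => rfl)
      (fun g => ⟨⟨_, hmemN c2.1 l' g.1 g.2 c2.2⟩, hmemPi c2.1 l' g.1 g.2 c2.2⟩) (fun g => rfl)
    exact ((eqv c1.1 l' c1.2).symm.bijective.prodMap (eqv c2.1 l' c2.2).symm.bijective).comp hbij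
  · -- C_class
    intro p' l' h'
    obtain ⟨s0, hs0, hset⟩ :=
      ph_Pi_parallel H hord hnbr hu (p := rep p') (l' := l') (by rw [hrep]; exact h')
    exact ⟨s0, (hrange p' l' h').trans hset⟩
  · -- C_distinct
    intro p' l1 l2 h1' h2' hne12 hEqRange
    have hPiEq : PiSub I nP φL (rep p') l1 = PiSub I nP φL (rep p') l2 := by
      rw [← hrange p' l1 h1', ← hrange p' l2 h2']
      exact hEqRange
    obtain ⟨g1, hg1⟩ := H.φL_surj l1
    have hmem1 : (⟨{q : P | nP q (rep p') ∧ I q g1}, hmemN p' l1 g1 hg1 h1'⟩ :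
        ↥(NbrLines I nP (rep p'))) ∈ PiSub I nP φL (rep p') l2 := by
      rw [← hPiEq]
      exact hmemPi p' l1 g1 hg1 h1'
    obtain ⟨g2, hg2, hsets⟩ := hmem1
    obtain ⟨q0, hq0⟩ := (hmemN p' l1 g1 hg1 h1').1
    have hcard := ph_restr_card H hnbr (rep p') g1 q0 hq0.1 hq0.2
    have hnt : Nontrivial {q : P // nP q (rep p') ∧ I q g1} := nontrivial_of_card hcard hm2
    obtain ⟨x, y, hxy⟩ := hnt
    have hxyv : x.1 ≠ y.1 := fun hh => hxy (Subtype.ext hh)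
    have hx2 : x.1 ∈ {q : P | nP q (rep p') ∧ I q g2} := by rw [← hsets]; exact x.2
    have hy2 : y.1 ∈ {q : P | nP q (rep p') ∧ I q g2} := by rw [← hsets]; exact y.2
    have hnl : nL g1 g2 := H.line_nbr g1 g2 ⟨x.1, y.1, hxyv, x.2.2, hx2.2, y.2.2, hy2.2⟩
    exact hne12 (by rw [← hg1, ← hg2]; exact (H.nL_iff g1 g2).mpr hnl)
  · -- main incidence equivalence
    intro p l
    constructor
    · intro hIl
      refine ⟨H.incid_pres p l hIl, ?_⟩
      simp only [Equiv.apply_symm_apply]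
      exact ⟨hprep p, hIl⟩
    · rintro ⟨h', hmem⟩
      simp only [Equiv.apply_symm_apply] at hmem
      exact hmem.2
end

section
/- Let m ≥ 2. Given the affine Hjelmslev construction data — an affine plane 𝒜 of order m; for each point p of 𝒜 an affine plane 𝒜_p of order m; for each line l of 𝒜 an orthogonal array 𝒪_l = OA(2, m, m) whose columns are labeled by the m points of l; and for each incident pair (p, l) a parallel class C(p,l) of 𝒜_p with its m lines labeled bijectively by the m symbols of 𝒪_l, such that distinct lines of 𝒜 through p receive distinct parallel classes of 𝒜_p — define the incidence structure ℋ whose points are pairs (p, a) with a a point of 𝒜_p, whose lines are pairs (l, r) with r a row of 𝒪_l, with (p, a) incident with (l, r) iff p lies on l and a lies on the line of C(p,l) labeled by the entry of 𝒪_l in row r and column p. Then ℋ, with point-neighbour relation (p,a) ∼ (p',a') iff p = p', line-neighbour relation (l,r) ∼ (l',r') iff l = l', and the quotient map φ(p,a) = p, φ(l,r) = l, is a 2-uniform (m,m) affine Hjelmslev plane with m⁴ points. -/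
theorem Parallel.symm {P L : Type} {I : P → L → Prop} {g h : L} (hgh : Parallel I g h) :
    Parallel I h g :=
  hgh.imp Eq.symm fun hd p hp => hd p hp.symm

namespace AffOrder

variable {P L : Type} {I : P → L → Prop} {m : ℕ}

theorem finite (hO : AffOrder I m) (hm : m ≠ 0) (l : L) : Finite {p : P // I p l} :=
  Nat.finite_of_card_ne_zero (hO l ▸ hm)

theorem exists_incident (hO : AffOrder I m) (hm : m ≠ 0) (l : L) : ∃ p : P, I p l := by
  obtain ⟨⟨p, hp⟩⟩ := (Nat.card_ne_zero.mp (hO l ▸ hm)).1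
  exact ⟨p, hp⟩

theorem exists_incident_ne (hO : AffOrder I m) (hm : 1 < m) (l : L) (p : P) :
    ∃ q : P, I q l ∧ q ≠ p := by
  have := hO.finite (by omega) l
  obtain ⟨⟨a, ha⟩, ⟨b, hb⟩, hab⟩ := Finite.one_lt_card_iff_nontrivial.mp (hO l ▸ hm)
  by_cases hap : a = p
  · exact ⟨b, hb, fun hbp => hab (Subtype.ext (hap.trans hbp.symm))⟩
  · exact ⟨a, ha, hap⟩

end AffOrder

namespace IsAffinePlane

variable {P L : Type} {I : P → L → Prop} {m : ℕ}

theorem eq_of_forall_incident_iff (hA : IsAffinePlane I) (hO : AffOrder I m) (hm : 1 < m)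
    {g h : L} (hgh : ∀ p : P, I p g ↔ I p h) : g = h := by
  obtain ⟨p, hp⟩ := hO.exists_incident (by omega) g
  obtain ⟨q, hq, hqp⟩ := hO.exists_incident_ne hm g p
  obtain ⟨l, -, hl⟩ := hA.point_line p q hqp.symm
  rw [hl g ⟨hp, hq⟩, hl h ⟨(hgh p).mp hp, (hgh q).mp hq⟩]

theorem parallel_trans (hA : IsAffinePlane I) {g h k : L} (hgh : Parallel I g h)
    (hhk : Parallel I h k) : Parallel I g k := by
  rcases hgh with rfl | hgh
  · exact hhk
  rcases hhk with rfl | hhk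
  · exact Or.inr hgh
  refine or_iff_not_imp_right.mpr fun hgk => ?_
  push Not at hgk
  obtain ⟨p, hpg, hpk⟩ := hgk
  have hph : ¬ I p h := fun hph => hgh p ⟨hpg, hph⟩
  -- `g` and `k` are both the parallel to `h` through `p`.
  obtain ⟨u, -, hu⟩ := hA.playfair p h hph
  exact (hu g ⟨hpg, fun q hq => hgh q hq.symm⟩).trans (hu k ⟨hpk, hhk⟩).symm

theorem setOf_parallel_eq (hA : IsAffinePlane I) {g h : L} (hgh : Parallel I g h) :
    {k : L | Parallel I g k} = {k : L | Parallel I h k} :=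
  Set.ext fun _ => ⟨hA.parallel_trans hgh.symm, hA.parallel_trans hgh⟩

theorem existsUnique_parallel (hA : IsAffinePlane I) (p : P) (g : L) :
    ∃! h : L, I p h ∧ Parallel I g h := by
  by_cases hpg : I p g
  · refine ⟨g, ⟨hpg, Or.inl rfl⟩, ?_⟩
    rintro h ⟨hph, rfl | hd⟩
    · rfl
    · exact absurd ⟨hpg, hph⟩ (hd p)
  · obtain ⟨h, ⟨hph, hd⟩, hu⟩ := hA.playfair p g hpg
    refine ⟨h, ⟨hph, Or.inr hd⟩, ?_⟩
    rintro k ⟨hpk, rfl | hd'⟩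
    · exact absurd hpk hpg
    · exact hu k ⟨hpk, hd'⟩

theorem exists_incident (hA : IsAffinePlane I) (p : P) : ∃ l : L, I p l := by
  obtain ⟨a, b, -, hab, -⟩ := hA.nondeg
  obtain ⟨q, hqp⟩ : ∃ q, q ≠ p := by
    by_cases hap : a = p
    · exact ⟨b, fun hbp => hab (hap.trans hbp.symm)⟩
    · exact ⟨a, hap⟩
  obtain ⟨l, ⟨-, hpl⟩, -⟩ := hA.point_line q p hqp
  exact ⟨l, hpl⟩

theorem exists_not_incident (hA : IsAffinePlane I) (p : P) : ∃ l : L, ¬ I p l := by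
  obtain ⟨a, b, c, hab, hac, hbc, habc⟩ := hA.nondeg
  obtain ⟨lab, ⟨hal, hbl⟩, -⟩ := hA.point_line a b hab
  obtain ⟨lac, ⟨hal', hcl'⟩, -⟩ := hA.point_line a c hac
  obtain ⟨lbc, ⟨hbl'', hcl''⟩, -⟩ := hA.point_line b c hbc
  by_cases hp : I p lab ∧ I p lac
  · -- `p` lies on two distinct lines through `a`, so `p = a`, which is off `lbc`.
    have hpa : p = a := by
      by_contra hpa
      obtain ⟨l, -, hl⟩ := hA.point_line p a hpa
      have : lab = lac := (hl lab ⟨hp.1, hal⟩).trans (hl lac ⟨hp.2, hal'⟩).symm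
      exact habc lab ⟨hal, hbl, this ▸ hcl'⟩
    exact ⟨lbc, fun hpl => habc lbc ⟨hpa ▸ hpl, hbl'', hcl''⟩⟩
  · rw [not_and_or] at hp
    exact hp.elim (⟨lab, ·⟩) (⟨lac, ·⟩)

/-- Through `p` there is one line joining `p` to each point of a line `l ∌ p`, plus the
parallel to `l`. -/
theorem card_lines_through (hA : IsAffinePlane I) (hO : AffOrder I m) (hm : m ≠ 0) (p : P) :
    Nat.card {g : L // I p g} = m + 1 := by
  obtain ⟨l, hpl⟩ := hA.exists_not_incident p
  obtain ⟨par, ⟨hppar, hpar⟩, hpar_unique⟩ := hA.playfair p l hpl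
  choose join hjoin hjoin_unique using
    fun q : {q : P // I q l} => hA.point_line p q fun hpq => hpl (hpq ▸ q.2)
  let f : Option {q : P // I q l} → {g : L // I p g}
    | none => ⟨par, hppar⟩
    | some q => ⟨join q, (hjoin q).1⟩
  have hf : Function.Bijective f := by
    refine ⟨?_, fun ⟨g, hpg⟩ => ?_⟩
    · rintro (_ | q₁) (_ | q₂) he <;> simp only [f, Subtype.mk.injEq] at he
      · rfl
      · exact absurd ⟨q₂.2, he ▸ (hjoin q₂).2⟩ (hpar q₂)
      · exact absurd ⟨q₁.2, he ▸ (hjoin q₁).2⟩ (hpar q₁)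
      · by_contra hq
        obtain ⟨k, -, hk⟩ := hA.point_line q₁.1 q₂.1 fun h => hq (congrArg some (Subtype.ext h))
        have hlk : l = join q₂ :=
          (hk l ⟨q₁.2, q₂.2⟩).trans (hk _ ⟨he ▸ (hjoin q₁).2, (hjoin q₂).2⟩).symm
        exact hpl (hlk ▸ (hjoin q₂).1)
    · by_cases hmeet : ∃ q, I q l ∧ I q g
      · obtain ⟨q, hql, hqg⟩ := hmeet
        exact ⟨some ⟨q, hql⟩, Subtype.ext (hjoin_unique ⟨q, hql⟩ g ⟨hpg, hqg⟩).symm⟩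
      · exact ⟨none, Subtype.ext (hpar_unique g ⟨hpg, not_exists.mp hmeet⟩).symm⟩
  have := hO.finite hm l
  rw [← Nat.card_eq_of_bijective f hf, Finite.card_option, hO l]

/-- Counting the points `≠ q` along the `m + 1` lines through `q` gives `1 + (m + 1)(m - 1)`. -/
theorem card_points (hA : IsAffinePlane I) (hO : AffOrder I m) (hm : m ≠ 0) :
    Nat.card P = m ^ 2 := by
  classical
  obtain ⟨q, -⟩ := hA.nondeg
  let Rest (g : {g : L // I q g}) := {r : {r : P // I r g} // r ≠ ⟨q, g.2⟩}
  let f : Option (Σ g, Rest g) → P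
    | none => q
    | some ⟨_, r⟩ => r.1.1
  have hf : Function.Bijective f := by
    refine ⟨?_, fun r => ?_⟩
    · rintro (_ | ⟨g₁, r₁⟩) (_ | ⟨g₂, r₂⟩) he <;> simp only [f] at he
      · rfl
      · exact absurd (Subtype.ext he.symm) r₂.2
      · exact absurd (Subtype.ext he) r₁.2
      · have hrq : r₁.1.1 ≠ q := fun h => r₁.2 (Subtype.ext h)
        obtain ⟨k, -, hk⟩ := hA.point_line q r₁.1.1 hrq.symm
        obtain rfl : g₁ = g₂ := Subtype.ext
          ((hk g₁ ⟨g₁.2, r₁.1.2⟩).trans (hk g₂ ⟨g₂.2, he ▸ r₂.1.2⟩).symm)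
        obtain rfl : r₁ = r₂ := Subtype.ext (Subtype.ext he)
        rfl
    · by_cases hrq : r = q
      · exact ⟨none, hrq.symm⟩
      · obtain ⟨k, ⟨hqk, hrk⟩, -⟩ := hA.point_line q r (Ne.symm hrq)
        exact ⟨some ⟨⟨k, hqk⟩, ⟨r, hrk⟩, fun h => hrq (congrArg Subtype.val h)⟩, rfl⟩
  have hRest (g : {g : L // I q g}) : Nat.card (Rest g) = m - 1 := by
    have := hO.finite hm g
    have := Nat.card_congr (Equiv.optionSubtypeNe (⟨q, g.2⟩ : {r : P // I r g}))
    rw [Finite.card_option, hO g] at this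
    simp only [Rest]
    omega
  have hlines := hA.card_lines_through hO hm q
  have : Finite {g : L // I q g} := Nat.finite_of_card_ne_zero (by omega)
  have := Fintype.ofFinite {g : L // I q g}
  have (g : {g : L // I q g}) : Finite (Rest g) :=
    have := hO.finite hm g
    Subtype.finite
  rw [← Nat.card_eq_of_bijective f hf, Finite.card_option, Nat.card_sigma]
  simp only [hRest, Finset.sum_const, Finset.card_univ, ← Nat.card_eq_fintype_card, hlines,
    smul_eq_mul]
  obtain ⟨k, rfl⟩ : ∃ k, m = k + 1 := ⟨m - 1, by omega⟩
  simp only [Nat.add_sub_cancel]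
  ring

theorem of_equiv {P' L' : Type} {I' : P' → L' → Prop} (hA : IsAffinePlane I) (eP : P ≃ P')
    (eL : L ≃ L') (hI : ∀ p l, I' (eP p) (eL l) ↔ I p l) : IsAffinePlane I' := by
  obtain rfl : I' = fun p' l' => I (eP.symm p') (eL.symm l') := by
    funext p' l'
    rw [← hI, eP.apply_symm_apply, eL.apply_symm_apply]
  refine ⟨fun p q hpq => ?_, fun p l hpl => ?_, ?_⟩
  · rw [← eL.existsUnique_congr_right]
    simpa using hA.point_line (eP.symm p) (eP.symm q) (by simpa using hpq)
  · rw [← eL.existsUnique_congr_right]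
    simpa [← eP.forall_congr_right] using hA.playfair (eP.symm p) (eL.symm l) hpl
  · obtain ⟨a, b, c, hab, hac, hbc, habc⟩ := hA.nondeg
    exact ⟨eP a, eP b, eP c, by simpa using hab, by simpa using hac, by simpa using hbc,
      by simpa [← eL.forall_congr_right] using habc⟩

end IsAffinePlane

namespace AHData

variable {m : ℕ} (D : AHData m)

theorem exists_incident_C {p : D.Pt} {l : D.Ln} (h : D.I p l) (a : D.APt p) :
    ∃ s : D.Sym l, D.AI p a (D.C p l h s) := by
  obtain ⟨g, hg⟩ := D.C_class p l h
  obtain ⟨k, ⟨hak, hgk⟩, -⟩ := (D.aff p).existsUnique_parallel a g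
  obtain ⟨s, rfl⟩ : k ∈ Set.range (D.C p l h) := hg ▸ hgk
  exact ⟨s, hak⟩

theorem range_C_eq {p : D.Pt} {l : D.Ln} (h : D.I p l) {c : D.ALn p}
    (hc : c ∈ Set.range (D.C p l h)) :
    Set.range (D.C p l h) = {k : D.ALn p | Parallel (D.AI p) c k} := by
  obtain ⟨g, hg⟩ := D.C_class p l h
  rw [hg] at hc ⊢
  exact (D.aff p).setOf_parallel_eq hc

theorem eq_of_mem_range_C {p : D.Pt} {l₁ l₂ : D.Ln} (h₁ : D.I p l₁) (h₂ : D.I p l₂)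
    {c : D.ALn p} (hc₁ : c ∈ Set.range (D.C p l₁ h₁)) (hc₂ : c ∈ Set.range (D.C p l₂ h₂)) :
    l₁ = l₂ := by
  by_contra hne
  exact D.C_distinct p l₁ l₂ h₁ h₂ hne ((D.range_C_eq h₁ hc₁).trans (D.range_C_eq h₂ hc₂).symm)

/-- The `m + 1` lines of `𝒜` through `p` receive distinct classes of `𝒜_p`, which has only
`m + 1` classes (one per line through a fixed point), so all classes occur. -/
theorem exists_mem_range_C (hm : m ≠ 0) (p : D.Pt) (c : D.ALn p) :
    ∃ (l : D.Ln) (h : D.I p l), c ∈ Set.range (D.C p l h) := by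
  obtain ⟨a, hac⟩ := (D.aord p).exists_incident hm c
  let f (l : {l : D.Ln // D.I p l}) : {k : D.ALn p // D.AI p a k} :=
    ⟨D.C p l l.2 (D.exists_incident_C l.2 a).choose, (D.exists_incident_C l.2 a).choose_spec⟩
  have hf : Function.Injective f := fun l₁ l₂ he =>
    Subtype.ext (D.eq_of_mem_range_C l₁.2 l₂.2 ⟨_, congrArg Subtype.val he⟩ ⟨_, rfl⟩)
  have hcard := (D.aff p).card_lines_through (D.aord p) hm a
  have : Finite {k : D.ALn p // D.AI p a k} := Nat.finite_of_card_ne_zero (by omega)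
  have hf' : Function.Bijective f := (Nat.bijective_iff_injective_and_card f).mpr
    ⟨hf, by rw [D.base.card_lines_through D.ord hm p, hcard]⟩
  obtain ⟨l, hl⟩ := hf'.2 ⟨c, hac⟩
  exact ⟨l, l.2, _, congrArg Subtype.val hl⟩

/-- Any column `q ≠ p` of `𝒪_l` puts the rows with entry `s` in column `p` in bijection with
the symbols. -/
theorem card_rows_entry_eq (hm : 1 < m) {p : D.Pt} {l : D.Ln} (hp : D.I p l) (s : D.Sym l) :
    Nat.card {r : D.Row l // D.O l r ⟨p, hp⟩ = s} = m := by
  obtain ⟨q, hq, hqp⟩ := D.ord.exists_incident_ne hm l p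
  have hpq : (⟨p, hp⟩ : {x : D.Pt // D.I x l}) ≠ ⟨q, hq⟩ :=
    fun e => hqp (congrArg Subtype.val e).symm
  obtain ⟨hinj, hsurj⟩ := D.oa l _ _ hpq
  let f (r : {r : D.Row l // D.O l r ⟨p, hp⟩ = s}) : D.Sym l := D.O l r ⟨q, hq⟩
  have hf : Function.Bijective f := by
    refine ⟨fun r₁ r₂ he => Subtype.ext (hinj ?_), fun t => ?_⟩
    · exact Prod.ext (r₁.2.trans r₂.2.symm) he
    · obtain ⟨r, hr⟩ := hsurj (s, t)
      exact ⟨⟨r, congrArg Prod.fst hr⟩, congrArg Prod.snd hr⟩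
  rw [Nat.card_eq_of_bijective f hf, D.sym_card l]

theorem exists_row_entry_eq (hm : 1 < m) {p : D.Pt} {l : D.Ln} (hp : D.I p l) (s : D.Sym l) :
    ∃ r : D.Row l, D.O l r ⟨p, hp⟩ = s := by
  have hcard : Nat.card {r : D.Row l // D.O l r ⟨p, hp⟩ = s} ≠ 0 := by
    rw [D.card_rows_entry_eq hm hp s]
    omega
  obtain ⟨⟨r, hr⟩⟩ := (Nat.card_ne_zero.mp hcard).1
  exact ⟨r, hr⟩

def localLine {p : D.Pt} {l : D.Ln} (h : D.I p l) (r : D.Row l) : D.ALn p :=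
  D.C p l h (D.O l r ⟨p, h⟩)

theorem HI_mk_iff {p : D.Pt} {a : D.APt p} {l : D.Ln} {r : D.Row l} :
    D.HI ⟨p, a⟩ ⟨l, r⟩ ↔ ∃ h : D.I p l, D.AI p a (D.localLine h r) :=
  Iff.rfl

theorem exists_localLine_eq (hm : 1 < m) {p : D.Pt} (c : D.ALn p) :
    ∃ (l : D.Ln) (h : D.I p l) (r : D.Row l), D.localLine h r = c := by
  obtain ⟨l, h, s, rfl⟩ := D.exists_mem_range_C (by omega) p c
  obtain ⟨r, hr⟩ := D.exists_row_entry_eq hm h s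
  exact ⟨l, h, r, by rw [localLine, hr]⟩

theorem localLine_not_parallel {p : D.Pt} {l l' : D.Ln} (h : D.I p l) (h' : D.I p l')
    (hll' : l ≠ l') (r : D.Row l) (r' : D.Row l') :
    ¬ Parallel (D.AI p) (D.localLine h r) (D.localLine h' r') := by
  intro hpar
  apply D.C_distinct p l l' h h' hll'
  rw [D.range_C_eq h ⟨_, rfl⟩, D.range_C_eq h' ⟨_, rfl⟩]
  exact (D.aff p).setOf_parallel_eq hpar

/-- Only lines over the `l` with `c ∈ C(p, l)` qualify, and among their rows exactly those
with the label of `c` in column `p`. -/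
theorem card_localLine_eq (hm : 1 < m) {p : D.Pt} (c : D.ALn p) :
    Nat.card {g : D.HLn // ∃ h : D.I p g.1, D.localLine h g.2 = c} = m := by
  obtain ⟨l, h, s, hs⟩ := D.exists_mem_range_C (by omega) p c
  let f (r : {r : D.Row l // D.O l r ⟨p, h⟩ = s}) :
      {g : D.HLn // ∃ h : D.I p g.1, D.localLine h g.2 = c} :=
    ⟨⟨l, r⟩, h, by rw [localLine, r.2, hs]⟩
  have hf : Function.Bijective f := by
    refine ⟨fun r₁ r₂ he => Subtype.ext (sigma_mk_injective (congrArg Subtype.val he)), ?_⟩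
    rintro ⟨⟨l', r⟩, h', hc⟩
    obtain rfl := D.eq_of_mem_range_C h' h ⟨_, hc⟩ ⟨s, hs⟩
    exact ⟨⟨r, D.C_inj p l' h (hc.trans hs.symm)⟩, rfl⟩
  rw [← Nat.card_eq_of_bijective f hf, D.card_rows_entry_eq hm h s]

def nbhdLine {p : D.Pt} (c : D.ALn p) : Set D.HPt :=
  Sigma.mk p '' {b | D.AI p b c}

theorem mk_mem_nbhdLine {p : D.Pt} {b : D.APt p} {c : D.ALn p} :
    (⟨p, b⟩ : D.HPt) ∈ D.nbhdLine c ↔ D.AI p b c :=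
  sigma_mk_injective.mem_set_image

theorem nbhdLine_injective (hm : 1 < m) (p : D.Pt) :
    Function.Injective (D.nbhdLine : D.ALn p → Set D.HPt) := fun c c' hcc' =>
  (D.aff p).eq_of_forall_incident_iff (D.aord p) hm fun b => by
    rw [← mk_mem_nbhdLine, ← mk_mem_nbhdLine, hcc']

theorem nbhdLine_nonempty (hm : m ≠ 0) {p : D.Pt} (c : D.ALn p) : (D.nbhdLine c).Nonempty :=
  let ⟨b, hb⟩ := (D.aord p).exists_incident hm c
  ⟨⟨p, b⟩, D.mk_mem_nbhdLine.mpr hb⟩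

theorem setOf_nbr_incident_of_incident {p : D.Pt} {l : D.Ln} (h : D.I p l) (a : D.APt p)
    (r : D.Row l) :
    {q : D.HPt | D.nPt q ⟨p, a⟩ ∧ D.HI q ⟨l, r⟩} = D.nbhdLine (D.localLine h r) := by
  ext ⟨p', b⟩
  constructor
  · rintro ⟨rfl, hH⟩
    exact D.mk_mem_nbhdLine.mpr (D.HI_mk_iff.mp hH).2
  · rintro ⟨b, hb, he⟩
    cases he
    exact ⟨rfl, h, hb⟩

theorem setOf_nbr_incident_of_not_incident {p : D.Pt} {l : D.Ln} (h : ¬ D.I p l)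
    (a : D.APt p) (r : D.Row l) : {q : D.HPt | D.nPt q ⟨p, a⟩ ∧ D.HI q ⟨l, r⟩} = ∅ :=
  Set.eq_empty_of_forall_notMem fun _ ⟨hn, hH⟩ => h ((show _ = p from hn) ▸ hH.1)

theorem setOf_nbr_incident_eq_nbhdLine_iff (hm : 1 < m) {p : D.Pt} (a : D.APt p) {l : D.Ln}
    (r : D.Row l) (c : D.ALn p) :
    {q : D.HPt | D.nPt q ⟨p, a⟩ ∧ D.HI q ⟨l, r⟩} = D.nbhdLine c ↔
      ∃ h : D.I p l, D.localLine h r = c := by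
  by_cases h : D.I p l
  · rw [D.setOf_nbr_incident_of_incident h, (D.nbhdLine_injective hm p).eq_iff]
    exact ⟨fun e => ⟨h, e⟩, fun ⟨_, e⟩ => e⟩
  · rw [D.setOf_nbr_incident_of_not_incident h]
    exact iff_of_false (D.nbhdLine_nonempty (by omega) c).ne_empty.symm fun ⟨h', _⟩ => h h'

theorem mem_nbrLines_iff (hm : 1 < m) {p : D.Pt} (a : D.APt p) (s : Set D.HPt) :
    s ∈ NbrLines D.HI D.nPt ⟨p, a⟩ ↔ ∃ c : D.ALn p, s = D.nbhdLine c := by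
  constructor
  · rintro ⟨hs, ⟨l, r⟩, rfl⟩
    by_cases h : D.I p l
    · exact ⟨_, D.setOf_nbr_incident_of_incident h a r⟩
    · rw [D.setOf_nbr_incident_of_not_incident h] at hs
      exact absurd hs Set.not_nonempty_empty
  · rintro ⟨c, rfl⟩
    obtain ⟨l, h, r, rfl⟩ := D.exists_localLine_eq hm c
    exact ⟨D.nbhdLine_nonempty (by omega) _, ⟨l, r⟩, (D.setOf_nbr_incident_of_incident h a r).symm⟩

/-- Points over one point of `𝒜` are joined inside `𝒜_p`; points over distinct `p, q` are
joined by the row of `𝒪_{pq}` with the prescribed entries in columns `p` and `q`. -/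
theorem exists_common_line (hm : 1 < m) (x y : D.HPt) : ∃ g : D.HLn, D.HI x g ∧ D.HI y g := by
  obtain ⟨p, a⟩ := x
  obtain ⟨q, b⟩ := y
  by_cases hpq : p = q
  · subst hpq
    obtain ⟨c, hac, hbc⟩ : ∃ c, D.AI p a c ∧ D.AI p b c := by
      by_cases hab : a = b
      · obtain ⟨c, hc⟩ := (D.aff p).exists_incident a
        exact ⟨c, hc, hab ▸ hc⟩
      · exact ((D.aff p).point_line a b hab).exists
    obtain ⟨l, h, r, rfl⟩ := D.exists_localLine_eq hm c
    exact ⟨⟨l, r⟩, ⟨h, hac⟩, ⟨h, hbc⟩⟩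
  · obtain ⟨l, ⟨hp, hq⟩, -⟩ := D.base.point_line p q hpq
    obtain ⟨s, hs⟩ := D.exists_incident_C hp a
    obtain ⟨t, ht⟩ := D.exists_incident_C hq b
    obtain ⟨r, hr⟩ := (D.oa l ⟨p, hp⟩ ⟨q, hq⟩ fun e => hpq (congrArg Subtype.val e)).2 (s, t)
    have hrp : D.O l r ⟨p, hp⟩ = s := congrArg Prod.fst hr
    have hrq : D.O l r ⟨q, hq⟩ = t := congrArg Prod.snd hr
    exact ⟨⟨l, r⟩, ⟨hp, hrp ▸ hs⟩, ⟨hq, hrq ▸ ht⟩⟩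

theorem nLn_of_two_common_points (g g' : D.HLn)
    (hgg' : ∃ x y : D.HPt, x ≠ y ∧ D.HI x g ∧ D.HI x g' ∧ D.HI y g ∧ D.HI y g') :
    D.nLn g g' := by
  obtain ⟨l, r⟩ := g
  obtain ⟨l', r'⟩ := g'
  obtain ⟨⟨p, a⟩, ⟨q, b⟩, hxy, ⟨h₁, ha⟩, ⟨h₁', ha'⟩, ⟨h₂, hb⟩, ⟨h₂', hb'⟩⟩ := hgg'
  show l = l'
  by_cases hpq : p = q
  · subst hpq
    obtain ⟨c, -, hc⟩ := (D.aff p).point_line a b fun hab => hxy (hab ▸ rfl)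
    exact D.eq_of_mem_range_C h₁ h₁' ⟨_, hc _ ⟨ha, hb⟩⟩ ⟨_, hc _ ⟨ha', hb'⟩⟩
  · obtain ⟨k, -, hk⟩ := D.base.point_line p q hpq
    exact (hk l ⟨h₁, h₂⟩).trans (hk l' ⟨h₁', h₂'⟩).symm

/-- Over a common point `p` of distinct `l, l'`, the two local lines lie in different classes
of `𝒜_p`, so they meet. -/
theorem parallel_of_disjoint (g g' : D.HLn) (hgg' : ∀ x : D.HPt, ¬(D.HI x g ∧ D.HI x g')) :
    Parallel D.I g.1 g'.1 := by
  obtain ⟨l, r⟩ := g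
  obtain ⟨l', r'⟩ := g'
  refine or_iff_not_imp_left.mpr fun hll' => ?_
  rintro p ⟨h, h'⟩
  have hmeet := D.localLine_not_parallel h h' hll' r r'
  simp only [Parallel, not_or, not_forall, not_not] at hmeet
  obtain ⟨-, a, ha, ha'⟩ := hmeet
  exact hgg' ⟨p, a⟩ ⟨⟨h, ha⟩, ⟨h', ha'⟩⟩

theorem isAHPlaneWith (hm : 1 < m) :
    IsAHPlaneWith D.HI D.nPt D.nLn D.I (fun x => x.1) (fun g => g.1) where
  nP_equiv := ⟨fun _ => rfl, Eq.symm, Eq.trans⟩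
  nL_equiv := ⟨fun _ => rfl, Eq.symm, Eq.trans⟩
  join := D.exists_common_line hm
  line_nbr := D.nLn_of_two_common_points
  target_aff := D.base
  φP_surj p := let ⟨a, _⟩ := (D.aff p).nondeg; ⟨⟨p, a⟩, rfl⟩
  φL_surj l := by
    obtain ⟨r⟩ := (Nat.card_ne_zero.mp (by rw [D.row_card l]; positivity)).1
    exact ⟨⟨l, r⟩, rfl⟩
  incid_pres _ _ h := h.1
  nP_iff _ _ := Iff.rfl
  nL_iff _ _ := Iff.rfl
  par := D.parallel_of_disjoint

theorem nbrsOnLines : NbrsOnLines D.HI D.nPt m := by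
  rintro ⟨l, r⟩ ⟨p, a⟩ ⟨h, -⟩
  let f (b : {b : D.APt p // D.AI p b (D.localLine h r)}) :
      {y : D.HPt // D.HI y ⟨l, r⟩ ∧ D.nPt ⟨p, a⟩ y} :=
    ⟨⟨p, b⟩, ⟨h, b.2⟩, rfl⟩
  have hf : Function.Bijective f := by
    refine ⟨fun b₁ b₂ he => Subtype.ext (sigma_mk_injective (congrArg Subtype.val he)), ?_⟩
    rintro ⟨⟨p', b⟩, hb, hp'⟩
    obtain rfl : p = p' := hp'
    exact ⟨⟨b, hb.2⟩, rfl⟩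
  rw [← Nat.card_eq_of_bijective f hf, D.aord p]

theorem twoUniform (hm : 1 < m) : TwoUniform D.HI D.nPt := by
  rintro ⟨p, a⟩
  let eL : D.ALn p ≃ NbrLines D.HI D.nPt ⟨p, a⟩ := Equiv.ofBijective
    (fun c => ⟨D.nbhdLine c, (D.mem_nbrLines_iff hm a _).mpr ⟨c, rfl⟩⟩)
    ⟨fun c c' he => D.nbhdLine_injective hm p (congrArg Subtype.val he), fun ⟨s, hs⟩ =>
      let ⟨c, hc⟩ := (D.mem_nbrLines_iff hm a s).mp hs; ⟨c, Subtype.ext hc.symm⟩⟩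
  refine ⟨(D.aff p).of_equiv (Equiv.sigmaSubtype p).symm eL fun b c => D.mk_mem_nbhdLine,
    m, fun s => ?_⟩
  obtain ⟨c, rfl⟩ := eL.surjective s
  refine (Nat.card_congr (Equiv.subtypeEquivRight fun ⟨l, r⟩ => ?_)).trans
    (D.card_localLine_eq hm c)
  exact D.setOf_nbr_incident_eq_nbhdLine_iff hm a r c

theorem card_HPt (hm : m ≠ 0) : Nat.card D.HPt = m ^ 4 := by
  have hcard := D.base.card_points D.ord hm
  have : Finite D.Pt := Nat.finite_of_card_ne_zero (by rw [hcard]; positivity)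
  have := Fintype.ofFinite D.Pt
  have (p : D.Pt) : Finite (D.APt p) :=
    Nat.finite_of_card_ne_zero (by rw [(D.aff p).card_points (D.aord p) hm]; positivity)
  rw [HPt, Nat.card_sigma]
  simp only [fun p => (D.aff p).card_points (D.aord p) hm, Finset.sum_const, Finset.card_univ,
    ← Nat.card_eq_fintype_card, hcard, smul_eq_mul]
  ring

end AHData

/-- For `m ≥ 2`, the structure `ℋ` produced by the affine Hjelmslev
construction, with point-neighbour relation "same first coordinate", line-neighbour relation
"same first coordinate", and quotient maps the first projections, is a 2-uniform `(m, m)`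
affine Hjelmslev plane with `m⁴` points. -/
theorem affine_hjelmslev_construction_is_2uniform_AH_plane (m : ℕ) (hm : 2 ≤ m)
    (D : AHData m) :
    IsAHPlaneWith D.HI D.nPt D.nLn D.I (fun x => x.1) (fun g => g.1) ∧
    NbrsOnLines D.HI D.nPt m ∧ AffOrder D.I m ∧
    TwoUniform D.HI D.nPt ∧
    Nat.card D.HPt = m ^ 4 :=
  ⟨D.isAHPlaneWith hm, D.nbrsOnLines, D.ord, D.twoUniform hm, D.card_HPt (by omega)⟩
end

section
/- A (t, r) projective Hjelmslev plane can be truncated to a (t, r) affine Hjelmslev plane: let ℋ be a (t, r) PH-plane with epimorphism φ onto a projective plane 𝒫 of order r, and let N be one line-neighbourhood of ℋ (a ∼-equivalence class of lines). Then the incidence structure obtained from ℋ by deleting all lines of N together with all points incident with some line of N, with the restricted incidence and restricted neighbour relations, is a (t, r) affine Hjelmslev plane; its associated affine plane is obtained from 𝒫 by deleting the line φ(N) and all points of 𝒫 on it, with epimorphism the restriction of φ. -/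
lemma card_three_le {α : Type} [Finite α] {a b c : α}
    (hab : a ≠ b) (hac : a ≠ c) (hbc : b ≠ c) : 3 ≤ Nat.card α := by
  classical
  have := Fintype.ofFinite α
  rw [Nat.card_eq_fintype_card]
  have h3 : ({a, b, c} : Finset α).card = 3 := by
    rw [Finset.card_insert_of_notMem (by simp [hab, hac]),
        Finset.card_insert_of_notMem (by simp [hbc]), Finset.card_singleton]
  calc 3 = ({a, b, c} : Finset α).card := h3.symm
    _ ≤ _ := Finset.card_le_univ _

lemma exists_ne_ne {α : Type} [Finite α] (h : 3 ≤ Nat.card α) (a b : α) :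
    ∃ c : α, c ≠ a ∧ c ≠ b := by
  classical
  have := Fintype.ofFinite α
  rw [Nat.card_eq_fintype_card] at h
  by_contra hc
  push_neg at hc
  have hsub : (Finset.univ : Finset α) ⊆ {a, b} := by
    intro c _
    by_cases hca : c = a
    · simp [hca]
    · simp [hc c hca]
  have h1 := Finset.card_le_card hsub
  have h2 : ({a, b} : Finset α).card ≤ 2 := Finset.card_insert_le _ _ |>.trans (by simp)
  rw [Finset.card_univ] at h1
  omega

lemma exists_pair_ne_of_two_le {α : Type} [Finite α] (h : 2 ≤ Nat.card α) :
    ∃ a b : α, a ≠ b := by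
  have := Fintype.ofFinite α
  rw [Nat.card_eq_fintype_card] at h
  have : Nontrivial α := Fintype.one_lt_card_iff_nontrivial.mp (by omega)
  exact exists_pair_ne α

section ProjHelpers

variable {P' L' : Type} {I' : P' → L' → Prop}

lemma proj_line_finite {r : ℕ} (hr : ProjOrder I' r) (l : L') :
    Finite {p : P' // I' p l} := by
  have h := hr l
  exact (Nat.card_pos_iff.mp (by omega)).2

/-- Every projective plane with order `r` has `r ≥ 2`. -/
lemma proj_order_two_le (hp : IsProjectivePlane I') {r : ℕ} (hr : ProjOrder I' r) :
    2 ≤ r := by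
  obtain ⟨a, b, c, d, hab, hac, had, hbc, hbd, hcd, habc, habd, hacd, hbcd⟩ := hp.nondeg
  obtain ⟨m, ⟨hma, hmb⟩, -⟩ := hp.point_line a b hab
  obtain ⟨k, ⟨hkc, hkd⟩, -⟩ := hp.point_line c d hcd
  have hmk : m ≠ k := fun h => habc m ⟨hma, hmb, h ▸ hkc⟩
  obtain ⟨e, ⟨hem, hek⟩, -⟩ := hp.line_point m k hmk
  have hea : e ≠ a := fun h => hacd k ⟨h ▸ hek, hkc, hkd⟩
  have heb : e ≠ b := fun h => hbcd k ⟨h ▸ hek, hkc, hkd⟩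
  have hfin : Finite {p : P' // I' p m} := proj_line_finite hr m
  have h3 : 3 ≤ Nat.card {p : P' // I' p m} :=
    card_three_le (a := (⟨a, hma⟩ : {p : P' // I' p m})) (b := ⟨b, hmb⟩) (c := ⟨e, hem⟩)
      (fun h => hab (congrArg Subtype.val h))
      (fun h => hea ((congrArg Subtype.val h).symm))
      (fun h => heb ((congrArg Subtype.val h).symm))
  have := hr m
  omega

/-- There is a point not on a given line. -/
lemma proj_exists_off (hp : IsProjectivePlane I') (n : L') : ∃ u : P', ¬ I' u n := by
  obtain ⟨a, b, c, d, hab, hac, had, hbc, hbd, hcd, habc, habd, hacd, hbcd⟩ := hp.nondeg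
  by_cases ha : I' a n
  · by_cases hb : I' b n
    · exact ⟨c, fun hc => habc n ⟨ha, hb, hc⟩⟩
    · exact ⟨b, hb⟩
  · exact ⟨a, ha⟩

/-- There is a triangle (three non-collinear points) avoiding a given line. -/
lemma proj_triangle_off (hp : IsProjectivePlane I') {r : ℕ} (hr : ProjOrder I' r)
    (n : L') : ∃ u v w : P', u ≠ v ∧ u ≠ w ∧ v ≠ w ∧ ¬ I' u n ∧ ¬ I' v n ∧ ¬ I' w n ∧
      ∀ l : L', ¬(I' u l ∧ I' v l ∧ I' w l) := by
  obtain ⟨u, hu⟩ := proj_exists_off hp n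
  have hfin : ∀ l : L', Finite {p : P' // I' p l} := proj_line_finite hr
  have h3 : ∀ l : L', 3 ≤ Nat.card {p : P' // I' p l} := by
    intro l; have := hr l; have := proj_order_two_le hp hr; omega
  obtain ⟨x, y, hxy⟩ := exists_pair_ne_of_two_le (α := {p : P' // I' p n}) (by have := h3 n; omega)
  have hxy' : x.1 ≠ y.1 := fun h => hxy (Subtype.ext h)
  have hux : u ≠ x.1 := fun h => hu (h ▸ x.2)
  have huy : u ≠ y.1 := fun h => hu (h ▸ y.2)
  obtain ⟨k₁, ⟨hk₁u, hk₁x⟩, huniq₁⟩ := hp.point_line u x.1 hux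
  obtain ⟨k₂, ⟨hk₂u, hk₂y⟩, huniq₂⟩ := hp.point_line u y.1 huy
  have hk₁n : k₁ ≠ n := fun h => hu (h ▸ hk₁u)
  have hk₂n : k₂ ≠ n := fun h => hu (h ▸ hk₂u)
  have hk₁₂ : k₁ ≠ k₂ := by
    intro h
    obtain ⟨m, -, humq⟩ := hp.point_line x.1 y.1 hxy'
    have h1 : k₁ = m := humq k₁ ⟨hk₁x, h ▸ hk₂y⟩
    have h2 : n = m := humq n ⟨x.2, y.2⟩
    exact hu ((h2 ▸ h1 : k₁ = n) ▸ hk₁u)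
  -- a point of k₁ other than u, x is off n
  have off₁ : ∀ p : P', I' p k₁ → p ≠ x.1 → ¬ I' p n := by
    intro p hpk hpx hpn
    obtain ⟨z, -, hz⟩ := hp.line_point k₁ n hk₁n
    exact hpx ((hz p ⟨hpk, hpn⟩).trans (hz x.1 ⟨hk₁x, x.2⟩).symm)
  have off₂ : ∀ p : P', I' p k₂ → p ≠ y.1 → ¬ I' p n := by
    intro p hpk hpy hpn
    obtain ⟨z, -, hz⟩ := hp.line_point k₂ n hk₂n
    exact hpy ((hz p ⟨hpk, hpn⟩).trans (hz y.1 ⟨hk₂y, y.2⟩).symm)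
  have := hfin k₁; have := hfin k₂
  obtain ⟨v, hvu, hvx⟩ := exists_ne_ne (h3 k₁) (⟨u, hk₁u⟩ : {p : P' // I' p k₁}) ⟨x.1, hk₁x⟩
  obtain ⟨w, hwu, hwy⟩ := exists_ne_ne (h3 k₂) (⟨u, hk₂u⟩ : {p : P' // I' p k₂}) ⟨y.1, hk₂y⟩
  have hvu' : v.1 ≠ u := fun h => hvu (Subtype.ext h)
  have hwu' : w.1 ≠ u := fun h => hwu (Subtype.ext h)
  have hvx' : v.1 ≠ x.1 := fun h => hvx (Subtype.ext h)
  have hwy' : w.1 ≠ y.1 := fun h => hwy (Subtype.ext h)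
  have hvw : v.1 ≠ w.1 := by
    intro h
    obtain ⟨z, -, hz⟩ := hp.line_point k₁ k₂ hk₁₂
    exact hvu' ((hz v.1 ⟨v.2, h ▸ w.2⟩).trans (hz u ⟨hk₁u, hk₂u⟩).symm)
  refine ⟨u, v.1, w.1, hvu'.symm, hwu'.symm, hvw, hu, off₁ v.1 v.2 hvx',
    off₂ w.1 w.2 hwy', ?_⟩
  intro l ⟨hlu, hlv, hlw⟩
  have h1 : l = k₁ := by
    obtain ⟨m, -, hm⟩ := hp.point_line u v.1 hvu'.symm.symm.symm
    exact (hm l ⟨hlu, hlv⟩).trans (hm k₁ ⟨hk₁u, v.2⟩).symm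
  have h2 : l = k₂ := by
    obtain ⟨m, -, hm⟩ := hp.point_line u w.1 hwu'.symm.symm.symm
    exact (hm l ⟨hlu, hlw⟩).trans (hm k₂ ⟨hk₂u, w.2⟩).symm
  exact hk₁₂ (h1 ▸ h2)

end ProjHelpers

/-- A `(t, r)` projective Hjelmslev plane can be truncated to a `(t, r)` affine
Hjelmslev plane: if `ℋ` is a `(t, r)` PH-plane with epimorphism `(φP, φL)` onto a projective
plane of order `r`, and `N` is the line-neighbourhood of a line `n₀`, then deleting all lines
of `N` and all points incident with some line of `N` yields, with the restricted incidence
and neighbour relations, a `(t, r)` AH-plane whose associated affine plane is obtained from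
the projective plane by deleting the line `φL n₀` and all its points, the epimorphism being
the restriction of `(φP, φL)`. -/
theorem PH_plane_truncation_is_AH_plane {P L P' L' : Type} (t r : ℕ)
    (I : P → L → Prop) (nP : P → P → Prop) (nL : L → L → Prop)
    (I' : P' → L' → Prop) (φP : P → P') (φL : L → L')
    (hPH : IsPHPlaneWith I nP nL I' φP φL)
    (ht : NbrsOnLines I nP t) (hr : ProjOrder I' r) (n₀ : L) :
    ∃ (ψP : {p : P // ∀ g : L, nL g n₀ → ¬ I p g} → {p' : P' // ¬ I' p' (φL n₀)})
      (ψL : {g : L // ¬ nL g n₀} → {g' : L' // g' ≠ φL n₀}),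
      (∀ p : {p : P // ∀ g : L, nL g n₀ → ¬ I p g}, (ψP p : P') = φP p.1) ∧
      (∀ g : {g : L // ¬ nL g n₀}, (ψL g : L') = φL g.1) ∧
      IsAHPlaneWith
        (fun (p : {p : P // ∀ g : L, nL g n₀ → ¬ I p g}) (g : {g : L // ¬ nL g n₀}) =>
          I p.1 g.1)
        (fun p q => nP p.1 q.1) (fun g h => nL g.1 h.1)
        (fun (p' : {p' : P' // ¬ I' p' (φL n₀)}) (g' : {g' : L' // g' ≠ φL n₀}) =>
          I' p'.1 g'.1)
        ψP ψL ∧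
      AffOrder
        (fun (p' : {p' : P' // ¬ I' p' (φL n₀)}) (g' : {g' : L' // g' ≠ φL n₀}) =>
          I' p'.1 g'.1) r ∧
      NbrsOnLines
        (fun (p : {p : P // ∀ g : L, nL g n₀ → ¬ I p g}) (g : {g : L // ¬ nL g n₀}) =>
          I p.1 g.1)
        (fun p q => nP p.1 q.1) t := by
  classical
  obtain ⟨hnP, hnL, hjoin, hmeet, hlnbr, hpnbr, hproj, hPs, hLs, hip, hnPiff, hnLiff⟩ := hPH
  -- lifting a point of I' on a line of H to a point of H on that line
  have lift_point : ∀ (l : L) (x' : P'), I' x' (φL l) → ∃ q : P, I q l ∧ φP q = x' := by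
    intro l x' hx'
    obtain ⟨z', hz'⟩ := proj_exists_off hproj (φL l)
    have hxz : x' ≠ z' := fun h => hz' (h ▸ hx')
    obtain ⟨m', ⟨hmx, hmz⟩, -⟩ := hproj.point_line x' z' hxz
    have hml : m' ≠ φL l := fun h => hz' (h ▸ hmz)
    obtain ⟨h, hh⟩ := hLs m'
    obtain ⟨q, hqh, hql⟩ := hmeet h l
    obtain ⟨z, -, hz⟩ := hproj.line_point m' (φL l) hml
    refine ⟨q, hql, ?_⟩
    have h1 := hz (φP q) ⟨hh ▸ hip q h hqh, hip q l hql⟩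
    have h2 := hz x' ⟨hmx, hx'⟩
    exact h1.trans h2.symm
  -- lifting a line of I' through the image of a point of H to a line of H through that point
  have lift_line : ∀ (p : P) (l' : L'), I' (φP p) l' → ∃ g : L, I p g ∧ φL g = l' := by
    intro p l' hl'
    have hfin : Finite {x : P' // I' x l'} := proj_line_finite hr l'
    have h3 : 3 ≤ Nat.card {x : P' // I' x l'} := by
      have := hr l'; have := proj_order_two_le hproj hr; omega
    obtain ⟨y, hy, -⟩ := exists_ne_ne h3 (⟨φP p, hl'⟩ : {x : P' // I' x l'}) ⟨φP p, hl'⟩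
    have hy' : y.1 ≠ φP p := fun h => hy (Subtype.ext h)
    obtain ⟨q, hq⟩ := hPs y.1
    obtain ⟨g, hpg, hqg⟩ := hjoin p q
    obtain ⟨m, -, hm⟩ := hproj.point_line (φP p) y.1 hy'.symm
    refine ⟨g, hpg, ?_⟩
    have h1 := hm (φL g) ⟨hip p g hpg, hq ▸ hip q g hqg⟩
    have h2 := hm l' ⟨hl', y.2⟩
    exact h1.trans h2.symm
  -- a surviving point maps off the deleted line
  have hoff : ∀ p : P, (∀ g : L, nL g n₀ → ¬ I p g) → ¬ I' (φP p) (φL n₀) := by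
    intro p hp hI
    obtain ⟨g, hpg, hgl⟩ := lift_line p (φL n₀) hI
    exact hp g ((hnLiff g n₀).mp hgl) hpg
  -- any point neighbouring a surviving point, on a surviving line, also survives
  have hsurv : ∀ q : P, ¬ I' (φP q) (φL n₀) → ∀ g : L, nL g n₀ → ¬ I q g := by
    intro q hq g hg hqg
    exact hq ((hnLiff g n₀).mpr hg ▸ hip q g hqg)
  refine ⟨fun p => ⟨φP p.1, hoff p.1 p.2⟩,
    fun g => ⟨φL g.1, fun h => g.2 ((hnLiff g.1 n₀).mp h)⟩,
    fun _ => rfl, fun _ => rfl, ?_, ?_, ?_⟩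
  · -- IsAHPlaneWith
    refine ⟨⟨fun x => hnP.refl x.1, fun h => hnP.symm h, fun h h' => hnP.trans h h'⟩,
      ⟨fun x => hnL.refl x.1, fun h => hnL.symm h, fun h h' => hnL.trans h h'⟩,
      ?_, ?_, ?_, ?_, ?_, ?_, ?_, ?_, ?_⟩
    · -- join
      intro p q
      obtain ⟨l, hpl, hql⟩ := hjoin p.1 q.1
      refine ⟨⟨l, fun hl => p.2 l hl hpl⟩, hpl, hql⟩
    · -- line_nbr
      rintro g h ⟨p, q, hpq, h1, h2, h3, h4⟩
      exact hlnbr g.1 h.1 ⟨p.1, q.1, fun he => hpq (Subtype.ext he), h1, h2, h3, h4⟩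
    · -- target_aff : the truncated plane is affine
      refine ⟨?_, ?_, ?_⟩
      · -- point_line
        intro p q hpq
        have hpq' : p.1 ≠ q.1 := fun h => hpq (Subtype.ext h)
        obtain ⟨l, ⟨hpl, hql⟩, hu⟩ := hproj.point_line p.1 q.1 hpq'
        refine ⟨⟨l, fun h => p.2 (h ▸ hpl)⟩, ⟨hpl, hql⟩, fun y hy => Subtype.ext (hu y.1 hy)⟩
      · -- playfair
        intro p l hpl
        obtain ⟨x', ⟨hxl, hxn⟩, hxu⟩ := hproj.line_point l.1 (φL n₀) l.2
        have hpx : p.1 ≠ x' := fun h => p.2 (h ▸ hxn)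
        obtain ⟨h', ⟨hhp, hhx⟩, hhu⟩ := hproj.point_line p.1 x' hpx
        have hhn : h' ≠ φL n₀ := fun h => p.2 (h ▸ hhp)
        have hlh : l.1 ≠ h' := fun h => hpl (h ▸ hhp)
        refine ⟨⟨h', hhn⟩, ⟨hhp, ?_⟩, ?_⟩
        · -- disjointness
          intro q ⟨hql, hqh⟩
          obtain ⟨z, -, hz⟩ := hproj.line_point l.1 h' hlh
          have : q.1 = x' := (hz q.1 ⟨hql, hqh⟩).trans (hz x' ⟨hxl, hhx⟩).symm
          exact q.2 (this ▸ hxn)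
        · -- uniqueness
          rintro k ⟨hkp, hkdisj⟩
          have hkl : k.1 ≠ l.1 := fun h => hpl (h ▸ hkp)
          obtain ⟨z', ⟨hzk, hzl⟩, -⟩ := hproj.line_point k.1 l.1 hkl
          have hzn : I' z' (φL n₀) := by
            by_contra hzn
            exact hkdisj ⟨z', hzn⟩ ⟨hzl, hzk⟩
          have hzx : z' = x' := hxu z' ⟨hzl, hzn⟩
          exact Subtype.ext (hhu k.1 ⟨hkp, hzx ▸ hzk⟩)
      · -- nondeg
        obtain ⟨u, v, w, huv, huw, hvw, hun, hvn, hwn, htri⟩ :=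
          proj_triangle_off hproj hr (φL n₀)
        exact ⟨⟨u, hun⟩, ⟨v, hvn⟩, ⟨w, hwn⟩,
          fun h => huv (congrArg Subtype.val h), fun h => huw (congrArg Subtype.val h),
          fun h => hvw (congrArg Subtype.val h), fun l hl => htri l.1 hl⟩
    · -- φP surjective
      rintro ⟨p', hp'⟩
      obtain ⟨p, hp⟩ := hPs p'
      exact ⟨⟨p, hsurv p (hp ▸ hp') ⟩, Subtype.ext hp⟩
    · -- φL surjective
      rintro ⟨g', hg'⟩
      obtain ⟨g, hg⟩ := hLs g'
      exact ⟨⟨g, fun h => hg' (hg ▸ (hnLiff g n₀).mpr h)⟩, Subtype.ext hg⟩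
    · -- incidence preserving
      intro p g h
      exact hip p.1 g.1 h
    · -- nP_iff
      intro p q
      exact ⟨fun h => (hnPiff p.1 q.1).mp (congrArg Subtype.val h),
        fun h => Subtype.ext ((hnPiff p.1 q.1).mpr h)⟩
    · -- nL_iff
      intro g h
      exact ⟨fun h' => (hnLiff g.1 h.1).mp (congrArg Subtype.val h'),
        fun h' => Subtype.ext ((hnLiff g.1 h.1).mpr h')⟩
    · -- parallelism
      intro g h hdisj
      by_cases heq : φL g.1 = φL h.1
      · exact Or.inl (Subtype.ext heq)
      · refine Or.inr ?_
        rintro q ⟨hqg, hqh⟩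
        obtain ⟨z, hzg, hzh⟩ := hmeet g.1 h.1
        obtain ⟨w', -, hw⟩ := hproj.line_point (φL g.1) (φL h.1) heq
        have hz' : φP z = q.1 :=
          (hw (φP z) ⟨hip z g.1 hzg, hip z h.1 hzh⟩).trans (hw q.1 ⟨hqg, hqh⟩).symm
        exact hdisj ⟨z, hsurv z (hz' ▸ q.2)⟩ ⟨hzg, hzh⟩
  · -- AffOrder r
    intro g'
    obtain ⟨x', hx', hxu⟩ := hproj.line_point g'.1 (φL n₀) g'.2
    have hfin : Finite {p : P' // I' p g'.1} := proj_line_finite hr g'.1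
    haveI : Unique {z : {p : P' // I' p g'.1} // I' z.1 (φL n₀)} :=
      { default := ⟨⟨x', hx'.1⟩, hx'.2⟩,
        uniq := fun z => Subtype.ext (Subtype.ext (hxu z.1.1 ⟨z.1.2, z.2⟩)) }
    have hsum := Nat.card_congr (Equiv.sumCompl (fun z : {p : P' // I' p g'.1} => I' z.1 (φL n₀)))
    rw [Nat.card_sum, Nat.card_unique, hr g'.1] at hsum
    have he : {z : {p : P' // I' p g'.1} // ¬ I' z.1 (φL n₀)} ≃
        {p : {p' : P' // ¬ I' p' (φL n₀)} // I' p.1 g'.1} :=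
      { toFun := fun z => ⟨⟨z.1.1, z.2⟩, z.1.2⟩,
        invFun := fun p => ⟨⟨p.1.1, p.2⟩, p.1.2⟩,
        left_inv := fun z => rfl, right_inv := fun p => rfl }
    have h2 := Nat.card_congr he
    show Nat.card {p : {p' : P' // ¬ I' p' (φL n₀)} // I' p.1 g'.1} = r
    omega
  · -- NbrsOnLines t
    intro l p hp
    have he : {q : {p : P // ∀ g : L, nL g n₀ → ¬ I p g} // I q.1 l.1 ∧ nP p.1 q.1} ≃
        {q : P // I q l.1 ∧ nP p.1 q} :=
      { toFun := fun z => ⟨z.1.1, z.2⟩,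
        invFun := fun q => ⟨⟨q.1, hsurv q.1
          (((hnPiff p.1 q.1).mpr q.2.2) ▸ hoff p.1 p.2)⟩, q.2⟩,
        left_inv := fun z => rfl, right_inv := fun q => rfl }
    rw [Nat.card_congr he]
    exact ht l.1 p.1 hp
end

section
/- Every orthogonal array OA(2, m, m) can be extended to an orthogonal array OA(2, m+1, m): if F : Fin (m²) → Fin m → S is a function with S a set of m symbols such that for any two distinct columns j₁ ≠ j₂ the map r ↦ (F r j₁, F r j₂) is a bijection from the rows onto S × S, then there exists a column c : Fin (m²) → S such that the extended array (F together with c as an (m+1)-st column) is an OA(2, m+1, m), i.e., for every column j of F the map r ↦ (F r j, c r) is also a bijection onto S × S. -/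
/-! Call two rows *disjoint* if they differ in every column. Distinct rows agree in at most one
column and every symbol occurs `m` times in every column, so exactly `m (m - 1)` rows other than
`r` agree with `r` somewhere, and `r` is disjoint from the remaining `m - 1`. If distinct rows
`r₁, r₂` disjoint from `r` shared the symbol `s` in column `j`, the `m` rows with `s` in column
`j` would contain, besides `r₁` and `r₂`, a different row meeting `r` in column `j'` for each of
the `m - 1` columns `j' ≠ j`. Hence being equal or disjoint is an equivalence relation with `m`
classes of `m` rows each, and labelling the classes by the `m` symbols gives the new column. -/

open Finset Function

def RowsDisjoint {R Col S : Type} (F : R → Col → S) (r r' : R) : Prop :=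
  ∀ j, F r j ≠ F r' j

instance {R Col S : Type} [Fintype Col] [DecidableEq S] (F : R → Col → S) (r r' : R) :
    Decidable (RowsDisjoint F r r') :=
  inferInstanceAs (Decidable (∀ j, F r j ≠ F r' j))

theorem Setoid.card_quotient_mul_eq_card {α : Type*} [Fintype α] (s : Setoid α)
    [DecidableRel s] [DecidableEq (Quotient s)] {n : ℕ} (h : ∀ a, #{b | s b a} = n) :
    Fintype.card (Quotient s) * n = Fintype.card α := by
  have hfiber : ∀ q ∈ (univ : Finset (Quotient s)), #{b | Quotient.mk s b = q} = n := by
    intro q _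
    induction q using Quotient.inductionOn with
    | h a => simpa only [Quotient.eq] using h a
  rw [← card_univ, ← card_univ,
    card_eq_sum_card_fiberwise fun b _ => mem_univ (Quotient.mk s b), sum_const_nat hfiber]

namespace IsOrthArray2

variable {R Col S : Type} {F : R → Col → S}

theorem eq_of_eq_of_eq (hF : IsOrthArray2 F) {j₁ j₂ : Col} (hj : j₁ ≠ j₂) {r r' : R}
    (h₁ : F r j₁ = F r' j₁) (h₂ : F r j₂ = F r' j₂) : r = r' :=
  (hF j₁ j₂ hj).1 (Prod.ext h₁ h₂)

theorem exists_row (hF : IsOrthArray2 F) {j₁ j₂ : Col} (hj : j₁ ≠ j₂) (s₁ s₂ : S) :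
    ∃ r, F r j₁ = s₁ ∧ F r j₂ = s₂ := by
  obtain ⟨r, hr⟩ := (hF j₁ j₂ hj).2 (s₁, s₂)
  exact ⟨r, congrArg Prod.fst hr, congrArg Prod.snd hr⟩

theorem card_eq_sq [Fintype R] [Fintype S] [Nontrivial Col] (hF : IsOrthArray2 F) :
    Fintype.card R = Fintype.card S ^ 2 := by
  obtain ⟨j₁, j₂, hj⟩ := exists_pair_ne Col
  rw [Fintype.card_of_bijective (hF j₁ j₂ hj), Fintype.card_prod, sq]

theorem card_filter_eq [Fintype R] [Fintype S] [DecidableEq S] [Nontrivial Col]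
    (hF : IsOrthArray2 F) (j : Col) (s : S) :
    #{r | F r j = s} = Fintype.card S := by
  obtain ⟨j', hj'⟩ := exists_ne j
  refine card_nbij (F · j') (fun _ _ => mem_univ _) ?_ fun t _ => ?_
  · intro r hr r' hr' h
    simp only [coe_filter, mem_univ, true_and, Set.mem_ofPred_eq] at hr hr'
    exact hF.eq_of_eq_of_eq hj'.symm (hr.trans hr'.symm) h
  · obtain ⟨r, hr, hrt⟩ := hF.exists_row hj'.symm s t
    exact ⟨r, by simpa using hr, hrt⟩

theorem card_filter_ne_and_exists_eq [Fintype R] [Fintype Col] [Fintype S] [DecidableEq R]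
    [DecidableEq S] [Nontrivial Col] (hF : IsOrthArray2 F) (r : R) :
    #{r' | r' ≠ r ∧ ∃ j, F r' j = F r j} = Fintype.card Col * (Fintype.card S - 1) := by
  have hunion : ({r' | r' ≠ r ∧ ∃ j, F r' j = F r j} : Finset R) =
      univ.biUnion fun j => ({r' | F r' j = F r j} : Finset R).erase r := by
    ext r'
    simp only [mem_filter, mem_univ, true_and, mem_biUnion, mem_erase]
    exact ⟨fun ⟨hne, j, hj⟩ => ⟨j, hne, hj⟩, fun ⟨j, hne, hj⟩ => ⟨hne, j, hj⟩⟩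
  rw [hunion, card_biUnion, sum_const_nat fun j _ => ?_, card_univ]
  · rw [card_erase_of_mem (by simp), hF.card_filter_eq]
  · intro j₁ _ j₂ _ hj
    simp only [disjoint_left, mem_erase, mem_filter, mem_univ, true_and]
    rintro a ⟨ha, h₁⟩ ⟨-, h₂⟩
    exact ha (hF.eq_of_eq_of_eq hj h₁ h₂)

theorem rowsDisjoint_of_rowsDisjoint [Fintype R] [Fintype Col] [Fintype S] [Nontrivial Col]
    (hF : IsOrthArray2 F) (hk : Fintype.card S ≤ Fintype.card Col) {r r₁ r₂ : R}
    (h₁ : RowsDisjoint F r r₁) (h₂ : RowsDisjoint F r r₂) (hne : r₁ ≠ r₂) :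
    RowsDisjoint F r₁ r₂ := by
  classical
  intro j hj
  set L : Finset R := {r' | F r' j = F r₁ j}
  have hr₁ : r₁ ∈ L := by simp [L]
  have hr₂ : r₂ ∈ L.erase r₁ := by simp [L, hne.symm, hj]
  have hφ : ∀ j' : {j' // j' ≠ j}, ∃ r', F r' j = F r₁ j ∧ F r' j' = F r j' := fun j' =>
    hF.exists_row j'.2.symm _ _
  choose φ hφs hφr using hφ
  have hmaps : ∀ j' ∈ univ, φ j' ∈ (L.erase r₁).erase r₂ := by
    intro j' _
    simp only [mem_erase, L, mem_filter, mem_univ, true_and]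
    refine ⟨fun h => h₂ j' ?_, fun h => h₁ j' ?_, hφs j'⟩ <;> rw [← h, hφr j']
  have hinj : Set.InjOn φ ↑(univ : Finset {j' // j' ≠ j}) := by
    intro a _ b _ hab
    by_contra hab'
    have hφa : φ a = r :=
      hF.eq_of_eq_of_eq (Subtype.coe_ne_coe.2 hab') (hφr a) (hab ▸ hφr b)
    exact h₁ j (hφa ▸ hφs a)
  have hcard := card_le_card_of_injOn φ hmaps hinj
  have hL : 1 < #L := one_lt_card.2 ⟨r₁, hr₁, r₂, mem_of_mem_erase hr₂, hne⟩
  rw [card_univ, Fintype.card_subtype_compl, Fintype.card_subtype_eq, card_erase_of_mem hr₂,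
    card_erase_of_mem hr₁] at hcard
  rw [hF.card_filter_eq] at hcard hL
  omega

theorem equivalence_eq_or_rowsDisjoint [Fintype R] [Fintype Col] [Fintype S] [Nontrivial Col]
    (hF : IsOrthArray2 F) (hk : Fintype.card S ≤ Fintype.card Col) :
    Equivalence fun r r' : R => r = r' ∨ RowsDisjoint F r r' where
  refl _ := Or.inl rfl
  symm := by
    rintro r r' (rfl | h)
    exacts [Or.inl rfl, Or.inr fun j hj => h j hj.symm]
  trans := by
    rintro r₁ r₂ r₃ (rfl | h₁₂) (rfl | h₂₃)
    · exact Or.inl rfl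
    · exact Or.inr h₂₃
    · exact Or.inr h₁₂
    · by_cases h₁₃ : r₁ = r₃
      · exact Or.inl h₁₃
      · exact Or.inr
          (hF.rowsDisjoint_of_rowsDisjoint hk (fun j hj => h₁₂ j hj.symm) h₂₃ h₁₃)

theorem card_filter_eq_or_rowsDisjoint [Fintype R] [Fintype Col] [Fintype S] [DecidableEq R]
    [DecidableEq S] [Nontrivial Col] (hF : IsOrthArray2 F)
    (hk : Fintype.card Col = Fintype.card S) (r : R) :
    #{r' | r' = r ∨ RowsDisjoint F r' r} = Fintype.card S := by
  have hcompl : ({r' | ¬(r' = r ∨ RowsDisjoint F r' r)} : Finset R) =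
      ({r' | r' ≠ r ∧ ∃ j, F r' j = F r j} : Finset R) := by
    simp only [RowsDisjoint, not_or, not_forall, not_not]
  have htotal := card_filter_add_card_filter_not (s := (univ : Finset R))
    (p := fun r' => r' = r ∨ RowsDisjoint F r' r)
  rw [hcompl, hF.card_filter_ne_and_exists_eq, card_univ, hF.card_eq_sq, hk, sq,
    Nat.mul_sub_one] at htotal
  have := Nat.le_mul_self (Fintype.card S)
  omega

theorem exists_bijective_pair [Fintype R] [Fintype Col] [Fintype S] [Nontrivial Col]
    (hF : IsOrthArray2 F) (hk : Fintype.card Col = Fintype.card S) :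
    ∃ c : R → S, ∀ j, Bijective fun r => (F r j, c r) := by
  classical
  let s : Setoid R := ⟨_, hF.equivalence_eq_or_rowsDisjoint hk.ge⟩
  let : DecidableRel s := fun r r' =>
    inferInstanceAs (Decidable (r = r' ∨ RowsDisjoint F r r'))
  have hcard : Fintype.card (Quotient s) = Fintype.card S := by
    have h := s.card_quotient_mul_eq_card (hF.card_filter_eq_or_rowsDisjoint hk)
    rw [hF.card_eq_sq, sq] at h
    exact Nat.eq_of_mul_eq_mul_right (hk ▸ Fintype.card_pos) h
  let e := Fintype.equivOfCardEq hcard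
  refine ⟨fun r => e (Quotient.mk s r), fun j => ?_⟩
  rw [Fintype.bijective_iff_injective_and_card, hF.card_eq_sq, Fintype.card_prod, sq]
  refine ⟨fun a b hab => ?_, rfl⟩
  obtain ⟨hj, hc⟩ := Prod.mk.inj hab
  rcases Quotient.eq.1 (e.injective hc) with h | h
  exacts [h, absurd hj (h j)]

end IsOrthArray2

/-- Every orthogonal array `OA(2, m, m)` can be extended to an orthogonal
array `OA(2, m+1, m)`: given `F : Fin (m²) → Fin m → S` with `S` a set of `m` symbols such
that for any two distinct columns the pair-of-entries map is a bijection onto `S × S`, there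
is a column `c : Fin (m²) → S` such that for every column `j` of `F` the map
`r ↦ (F r j, c r)` is also a bijection onto `S × S`. -/
theorem orth_array_extension (m : ℕ) (S : Type) (hS : Nat.card S = m)
    (F : Fin (m ^ 2) → Fin m → S)
    (hF : ∀ j₁ j₂ : Fin m, j₁ ≠ j₂ →
      Function.Bijective (fun r : Fin (m ^ 2) => (F r j₁, F r j₂))) :
    ∃ c : Fin (m ^ 2) → S, ∀ j : Fin m,
      Function.Bijective (fun r : Fin (m ^ 2) => (F r j, c r)) := by
  obtain hm | hm := lt_or_ge m 2
  · interval_cases m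
    · exact ⟨fun r => r.elim0, fun j => j.elim0⟩
    · have : Subsingleton S := (Nat.card_eq_one_iff_unique.1 hS).1
      refine ⟨fun r => F r 0, fun _ => ⟨fun a b _ => Fin.ext ?_, fun _ => ?_⟩⟩
      · omega
      · exact ⟨0, Subsingleton.elim _ _⟩
  · have : Nontrivial (Fin m) := Fin.nontrivial_iff_two_le.2 hm
    have : Finite S := Nat.finite_of_card_ne_zero (by omega)
    have := Fintype.ofFinite S
    exact IsOrthArray2.exists_bijective_pair hF
      (by rw [Fintype.card_fin, ← Nat.card_eq_fintype_card, hS])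
end
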